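/- arXiv:1711.11517 — 6 statements merged into one kernel-verified Lean document; each statement's English description precedes it below -/
import Mathlib

section
/- If D is a strongly connected digraph with fewer than g(D)+2 vertices, where g(D) is the girth of D, then D is not λ'-connected, i.e., D has no restricted arc-cut. -/
/-- A digraph on vertex type `V`, given by its adjacency (arc) relation. -/
structure Digr (V : Type) where
  Adj : V → V → Prop

namespace Digr

variable {V : Type}

/-- Reachability by directed paths. -/
def Reach (D : Digr V) : V → V → Prop := Relation.ReflTransGen D.Adj

/-- A digraph is strongly connected if every vertex reaches every other. -/
def StronglyConnected (D : Digr V) : Prop := ∀ u v : V, D.Reach u v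

/-- An oriented graph: no loops and no pair of opposite arcs. -/
def Oriented (D : Digr V) : Prop := ∀ u v : V, D.Adj u v → ¬ D.Adj v u

/-- The digraph contains at least one arc. -/
def HasArc (D : Digr V) : Prop := ∃ u v : V, D.Adj u v

/-- Delete a set of arcs. -/
def delArcs (D : Digr V) (S : Set (V × V)) : Digr V :=
  ⟨fun a b => D.Adj a b ∧ (a, b) ∉ S⟩

/-- Delete a set of vertices (keep arcs avoiding them). -/
def delVerts (D : Digr V) (X : Set V) : Digr V :=
  ⟨fun a b => D.Adj a b ∧ a ∉ X ∧ b ∉ X⟩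

/-- Induced subdigraph on a vertex set. -/
def induce (D : Digr V) (X : Set V) : Digr V :=
  ⟨fun a b => a ∈ X ∧ b ∈ X ∧ D.Adj a b⟩

/-- The induced subdigraph on `X` is strongly connected. -/
def StronglyConnectedOn (D : Digr V) (X : Set V) : Prop :=
  ∀ u ∈ X, ∀ v ∈ X, (D.induce X).Reach u v

/-- Mutual reachability. -/
def MReach (D : Digr V) (u v : V) : Prop := D.Reach u v ∧ D.Reach v u

/-- `X` is a strong component: an equivalence class of mutual reachability. -/
def IsStrongComponent (D : Digr V) (X : Set V) : Prop :=
  ∃ x : V, X = {y | D.MReach x y}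

/-- `S` is a restricted arc-cut: a set of arcs whose deletion leaves a
non-trivial strong component `X` (containing an arc) such that deleting the
vertices of `X` from `D` leaves an arc. -/
def IsRestrictedArcCut (D : Digr V) (S : Set (V × V)) : Prop :=
  (∀ p ∈ S, D.Adj p.1 p.2) ∧
  ∃ X : Set V, (D.delArcs S).IsStrongComponent X ∧
    (∃ u ∈ X, ∃ v ∈ X, (D.delArcs S).Adj u v) ∧
    (D.delVerts X).HasArc

/-- A digraph is λ'-connected if it admits a restricted arc-cut. -/
def LambdaPrimeConnected (D : Digr V) : Prop :=
  ∃ S : Set (V × V), D.IsRestrictedArcCut S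

/-- λ'(D): minimum size of a restricted arc-cut. -/
noncomputable def lambdaPrime (D : Digr V) [Fintype V] : ℕ :=
  sInf {n : ℕ | ∃ S : Finset (V × V), D.IsRestrictedArcCut ↑S ∧ S.card = n}

/-- λ(D): the arc-connectivity, the minimum size of an arc set whose removal
destroys strong connectivity. -/
noncomputable def lambda (D : Digr V) [Fintype V] : ℕ :=
  sInf {n : ℕ | ∃ S : Finset (V × V), (∀ p ∈ S, D.Adj p.1 p.2) ∧
    ¬ (D.delArcs ↑S).StronglyConnected ∧ S.card = n}

/-- The list `l` of distinct vertices forms a directed cycle. -/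
def IsCycleList (D : Digr V) (l : List V) : Prop :=
  ∃ h : l ≠ [], l.Nodup ∧ l.Chain' D.Adj ∧ D.Adj (l.getLast h) (l.head h)

/-- The girth: minimum length of a directed cycle. -/
noncomputable def girth (D : Digr V) : ℕ :=
  sInf {n : ℕ | ∃ l : List V, D.IsCycleList l ∧ l.length = n}

/-- `(u,v,w,z,u)` is a 4-cycle of `D`. -/
def Cycle4 (D : Digr V) (u v w z : V) : Prop := D.IsCycleList [u, v, w, z]

/-- Out-degree. -/
def outDeg (D : Digr V) [Fintype V] [DecidableRel D.Adj] (v : V) : ℕ :=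
  (Finset.univ.filter fun w => D.Adj v w).card

/-- In-degree. -/
def inDeg (D : Digr V) [Fintype V] [DecidableRel D.Adj] (v : V) : ℕ :=
  (Finset.univ.filter fun w => D.Adj w v).card

/-- ξ(D): minimum over girth cycles `C` of
`min (Σ d⁺ − g, Σ d⁻ − g)`. -/
noncomputable def xi (D : Digr V) [Fintype V] [DecidableRel D.Adj] : ℤ :=
  sInf {k : ℤ | ∃ l : List V, D.IsCycleList l ∧ l.length = D.girth ∧
    k = min (((l.map D.outDeg).sum : ℤ) - (D.girth : ℤ))
            (((l.map D.inDeg).sum : ℤ) - (D.girth : ℤ))}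

/-- ∂⁺(X): the set of arcs from `X` to its complement. -/
noncomputable def outBoundary (D : Digr V) [Fintype V] (X : Set V) : Finset (V × V) :=
  (Set.toFinite {p : V × V | p.1 ∈ X ∧ p.2 ∉ X ∧ D.Adj p.1 p.2}).toFinset

/-- ∂⁻(X): the set of arcs from the complement of `X` into `X`. -/
noncomputable def inBoundary (D : Digr V) [Fintype V] (X : Set V) : Finset (V × V) :=
  (Set.toFinite {p : V × V | p.1 ∉ X ∧ p.2 ∈ X ∧ D.Adj p.1 p.2}).toFinset

/-- The list of arcs of a cycle given as a vertex list. -/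
def cycleArcs (l : List V) : List (V × V) := l.zip (l.rotate 1)

end Digr

/-!
An arc inside the non-trivial strong component `X` of `D − S` closes a cycle of `D` all of whose
vertices lie in `X`, so `|X| ≥ g(D)`; the arc of `D − X` joins two further, distinct vertices.
-/

open List in
theorem List.exists_nodup_isChain_cons_of_reflTransGen {α : Type*} {r : α → α → Prop} {a b : α}
    (h : Relation.ReflTransGen r a b) :
    ∃ l, (a :: l).Nodup ∧ IsChain r (a :: l) ∧ (a :: l).getLast (cons_ne_nil _ _) = b ∧
      ∀ x ∈ a :: l, Relation.ReflTransGen r a x ∧ Relation.ReflTransGen r x b := by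
  induction h using Relation.ReflTransGen.head_induction_on with
  | refl => exact ⟨[], nodup_singleton _, .singleton _, rfl, by simp [Relation.ReflTransGen.refl]⟩
  | @head a c hac _ ih =>
    obtain ⟨l, hnd, hch, hlast, hreach⟩ := ih
    by_cases ha : a ∈ c :: l
    · obtain ⟨s, t, hst⟩ := mem_iff_append.mp ha
      rw [hst] at hnd hch hreach
      refine ⟨t, (nodup_append.mp hnd).2.1, hch.suffix (suffix_append s _), ?_, fun x hx => ?_⟩
      · rw [← hlast, getLast_congr _ (by simp) hst, getLast_append_of_ne_nil _ (cons_ne_nil _ _)]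
      · obtain ⟨hcx, hxb⟩ := hreach x (mem_append_right s hx)
        exact ⟨.head hac hcx, hxb⟩
    · refine ⟨c :: l, nodup_cons.mpr ⟨ha, hnd⟩, hch.cons_cons hac, by rwa [getLast_cons_cons], ?_⟩
      rintro x (_ | ⟨_, hx⟩)
      · exact ⟨.refl, .head hac (hreach c mem_cons_self).2⟩
      · obtain ⟨hcx, hxb⟩ := hreach x hx
        exact ⟨.head hac hcx, hxb⟩

namespace Digr

variable {V : Type} {D : Digr V}

theorem girth_le_length {l : List V} (hl : D.IsCycleList l) : D.girth ≤ l.length :=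
  Nat.sInf_le ⟨l, hl, rfl⟩

theorem IsCycleList.of_delArcs {S : Set (V × V)} {l : List V}
    (hl : (D.delArcs S).IsCycleList l) : D.IsCycleList l :=
  let ⟨hne, hnd, hch, hclose⟩ := hl
  ⟨hne, hnd, hch.imp fun _ _ h => h.1, hclose.1⟩

theorem exists_cycleList_of_adj_of_reach {u v : V} (huv : D.Adj u v) (hvu : D.Reach v u) :
    ∃ l, D.IsCycleList l ∧ ∀ x ∈ l, D.MReach v x := by
  obtain ⟨l, hnd, hch, hlast, hreach⟩ := List.exists_nodup_isChain_cons_of_reflTransGen hvu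
  refine ⟨v :: l, ⟨List.cons_ne_nil _ _, hnd, hch, hlast ▸ huv⟩, fun x hx => ?_⟩
  obtain ⟨hvx, hxu⟩ := hreach x hx
  exact ⟨hvx, hxu.tail huv⟩

theorem IsStrongComponent.exists_cycleList_subset {X : Set V} (hX : D.IsStrongComponent X)
    {u v : V} (hu : u ∈ X) (hv : v ∈ X) (huv : D.Adj u v) :
    ∃ l, D.IsCycleList l ∧ ∀ x ∈ l, x ∈ X := by
  obtain ⟨x₀, rfl⟩ := hX
  obtain ⟨l, hl, hreach⟩ := exists_cycleList_of_adj_of_reach huv (hv.2.trans hu.1)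
  exact ⟨l, hl, fun x hx => ⟨hv.1.trans (hreach x hx).1, (hreach x hx).2.trans hv.2⟩⟩

theorem IsRestrictedArcCut.girth_add_two_le_card [Fintype V] (hloop : ∀ a, ¬ D.Adj a a)
    {S : Set (V × V)} (hS : D.IsRestrictedArcCut S) : D.girth + 2 ≤ Fintype.card V := by
  classical
  obtain ⟨-, X, hX, ⟨u, hu, v, hv, huv⟩, a, b, ⟨hab, haX, hbX⟩⟩ := hS
  obtain ⟨l, hl, hlX⟩ := hX.exists_cycleList_subset hu hv huv
  have hal : a ∉ l.toFinset := fun h => haX (hlX a (List.mem_toFinset.mp h))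
  have hbl : b ∉ l.toFinset := fun h => hbX (hlX b (List.mem_toFinset.mp h))
  have hne : a ≠ b := by rintro rfl; exact hloop a hab
  calc D.girth + 2 ≤ l.length + 2 := by gcongr; exact girth_le_length hl.of_delArcs
    _ = (insert a (insert b l.toFinset)).card := by
      rw [Finset.card_insert_of_notMem (by simp [hne, hal]), Finset.card_insert_of_notMem hbl,
        List.toFinset_card_of_nodup hl.2.1]
    _ ≤ Fintype.card V := Finset.card_le_univ _

end Digr

theorem stmt0_general {V : Type} [Fintype V] (D : Digr V) (hO : D.Oriented)
    (h : Fintype.card V < D.girth + 2) :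
    ¬ D.LambdaPrimeConnected := by
  rintro ⟨S, hS⟩
  exact (hS.girth_add_two_le_card fun a ha => hO a a ha ha).not_gt h

/-- A strongly connected oriented digraph with fewer than
`girth + 2` vertices is not λ'-connected. -/
theorem stmt0 {V : Type} [Fintype V] (D : Digr V) (hO : D.Oriented)
    (hS : D.StronglyConnected) (h : Fintype.card V < D.girth + 2) :
    ¬ D.LambdaPrimeConnected :=
  stmt0_general D hO h
end

section
/- Let D be a strongly connected digraph of girth 4 and let C = (u,v,w,z,u) be a 4-cycle of D. If the digraph D − {u,v,w,z} contains an arc, then D is λ'-connected and λ'(D) ≤ ξ(C), where ξ(C) = min{ d⁺(u)+d⁺(v)+d⁺(w)+d⁺(z) − 4 , d⁻(u)+d⁻(v)+d⁻(w)+d⁻(z) − 4 }. -/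
/-!
Put `X = {u, v, w, z}` and `S = ∂⁺(X)`. In `D − S` no arc leaves `X`, so the strong component
of `u` lies inside `X`; it still contains the whole 4-cycle, and the arc of `D − X` survives
outside it, so `S` is a restricted arc-cut. Since the four cycle arcs are internal to `X`,
`|∂⁺(X)| ≤ d⁺(u) + d⁺(v) + d⁺(w) + d⁺(z) − 4`. Dually, in `D − ∂⁻(X)` nothing enters `X`, which
traps the strong component of `u` by backward reachability, and `|∂⁻(X)| ≤ Σ d⁻ − 4`.
-/

namespace Digr

variable {V : Type} {D : Digr V}

theorem cycle4_iff {u v w z : V} :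
    D.Cycle4 u v w z ↔
      [u, v, w, z].Nodup ∧ D.Adj u v ∧ D.Adj v w ∧ D.Adj w z ∧ D.Adj z u := by
  simp [Cycle4, IsCycleList, List.Chain', List.isChain_cons_cons, and_assoc]

theorem lambdaPrime_le_card [Fintype V] {S : Finset (V × V)} (hS : D.IsRestrictedArcCut ↑S) :
    D.lambdaPrime ≤ S.card :=
  Nat.sInf_le ⟨S, hS, rfl⟩

theorem mem_outBoundary [Fintype V] {X : Set V} {p : V × V} :
    p ∈ D.outBoundary X ↔ p.1 ∈ X ∧ p.2 ∉ X ∧ D.Adj p.1 p.2 :=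
  Set.Finite.mem_toFinset _

theorem mem_inBoundary [Fintype V] {X : Set V} {p : V × V} :
    p ∈ D.inBoundary X ↔ p.1 ∉ X ∧ p.2 ∈ X ∧ D.Adj p.1 p.2 :=
  Set.Finite.mem_toFinset _

theorem Reach.mem_of_delArcs_outBoundary [Fintype V] {X : Set V} {a b : V}
    (h : (D.delArcs ↑(D.outBoundary X)).Reach a b) (ha : a ∈ X) : b ∈ X := by
  induction h with
  | refl => exact ha
  | tail _ hcb ih =>
    by_contra hb
    exact hcb.2 (mem_outBoundary.2 ⟨ih, hb, hcb.1⟩)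

theorem Reach.mem_of_delArcs_inBoundary [Fintype V] {X : Set V} {a b : V}
    (h : (D.delArcs ↑(D.inBoundary X)).Reach a b) (hb : b ∈ X) : a ∈ X := by
  induction h using Relation.ReflTransGen.head_induction_on with
  | refl => exact hb
  | head hac _ ih =>
    by_contra ha
    exact hac.2 (mem_inBoundary.2 ⟨ha, ih, hac.1⟩)

section Degrees

variable [Fintype V] [DecidableRel D.Adj]

theorem card_outBoundary_add_card_le_sum_outDeg (T : Finset V) {B : Finset (V × V)}
    (hB : ∀ p ∈ B, p.1 ∈ T ∧ p.2 ∈ T ∧ D.Adj p.1 p.2) :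
    (D.outBoundary ↑T).card + B.card ≤ ∑ x ∈ T, D.outDeg x := by
  classical
  have hdisj : Disjoint (D.outBoundary ↑T) B :=
    Finset.disjoint_left.2 fun p hp hpB => (mem_outBoundary.1 hp).2.1 (hB p hpB).2.1
  calc (D.outBoundary ↑T).card + B.card
      = (D.outBoundary ↑T ∪ B).card := (Finset.card_union_of_disjoint hdisj).symm
    _ ≤ ((T ×ˢ Finset.univ).filter fun p => D.Adj p.1 p.2).card := by
      refine Finset.card_le_card fun p hp => ?_
      rcases Finset.mem_union.1 hp with hp | hp
      · obtain ⟨h1, -, h3⟩ := mem_outBoundary.1 hp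
        simpa using ⟨h1, h3⟩
      · obtain ⟨h1, -, h3⟩ := hB p hp
        simpa using ⟨h1, h3⟩
    _ = ∑ x ∈ T, D.outDeg x := by
      simp only [outDeg, Finset.card_filter, Finset.sum_product]

theorem card_inBoundary_add_card_le_sum_inDeg (T : Finset V) {B : Finset (V × V)}
    (hB : ∀ p ∈ B, p.1 ∈ T ∧ p.2 ∈ T ∧ D.Adj p.1 p.2) :
    (D.inBoundary ↑T).card + B.card ≤ ∑ x ∈ T, D.inDeg x := by
  classical
  have hdisj : Disjoint (D.inBoundary ↑T) B :=
    Finset.disjoint_left.2 fun p hp hpB => (mem_inBoundary.1 hp).1 (hB p hpB).1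
  calc (D.inBoundary ↑T).card + B.card
      = (D.inBoundary ↑T ∪ B).card := (Finset.card_union_of_disjoint hdisj).symm
    _ ≤ ((Finset.univ ×ˢ T).filter fun p => D.Adj p.1 p.2).card := by
      refine Finset.card_le_card fun p hp => ?_
      rcases Finset.mem_union.1 hp with hp | hp
      · obtain ⟨-, h2, h3⟩ := mem_inBoundary.1 hp
        simpa using ⟨h2, h3⟩
      · obtain ⟨-, h2, h3⟩ := hB p hp
        simpa using ⟨h2, h3⟩
    _ = ∑ x ∈ T, D.inDeg x := by
      simp only [inDeg, Finset.card_filter, Finset.sum_product_right]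

end Degrees

theorem isRestrictedArcCut_of_mReach_subset {S : Set (V × V)} {X : Set V} {a b : V}
    (hS : ∀ p ∈ S, D.Adj p.1 p.2) (hab : (D.delArcs S).Adj a b)
    (hba : (D.delArcs S).Reach b a) (hX : ∀ y, (D.delArcs S).MReach a y → y ∈ X)
    (hArc : (D.delVerts X).HasArc) : D.IsRestrictedArcCut S := by
  refine ⟨hS, {y | (D.delArcs S).MReach a y}, ⟨a, rfl⟩,
    ⟨a, ⟨.refl, .refl⟩, b, ⟨.single hab, hba⟩, hab⟩, ?_⟩
  obtain ⟨c, d, hcd, hc, hd⟩ := hArc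
  exact ⟨c, d, hcd, fun h => hc (hX c h), fun h => hd (hX d h)⟩

namespace Cycle4

variable {u v w z : V}

theorem isRestrictedArcCut (hC : D.Cycle4 u v w z) {S : Set (V × V)}
    (hS : ∀ p ∈ S, D.Adj p.1 p.2)
    (hSX : ∀ p ∈ S, p.1 ∈ ({u, v, w, z} : Set V) → p.2 ∉ ({u, v, w, z} : Set V))
    (hX : ∀ y, (D.delArcs S).MReach u y → y ∈ ({u, v, w, z} : Set V))
    (hArc : (D.delVerts {u, v, w, z}).HasArc) : D.IsRestrictedArcCut S := by
  obtain ⟨-, huv, hvw, hwz, hzu⟩ := cycle4_iff.1 hC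
  have survives : ∀ {a b}, D.Adj a b → a ∈ ({u, v, w, z} : Set V) → b ∈ ({u, v, w, z} : Set V) →
      (D.delArcs S).Adj a b :=
    fun hab ha hb => ⟨hab, fun h => hSX _ h ha hb⟩
  refine isRestrictedArcCut_of_mReach_subset hS (survives huv (by simp) (by simp)) ?_ hX hArc
  exact .tail (.tail (.single (survives hvw (by simp) (by simp))) (survives hwz (by simp) (by simp)))
    (survives hzu (by simp) (by simp))

theorem isRestrictedArcCut_outBoundary [Fintype V] (hC : D.Cycle4 u v w z)
    (hArc : (D.delVerts {u, v, w, z}).HasArc) :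
    D.IsRestrictedArcCut ↑(D.outBoundary {u, v, w, z}) :=
  hC.isRestrictedArcCut (fun _ hp => (mem_outBoundary.1 hp).2.2)
    (fun _ hp _ => (mem_outBoundary.1 hp).2.1)
    (fun _ hy => hy.1.mem_of_delArcs_outBoundary (by simp)) hArc

theorem isRestrictedArcCut_inBoundary [Fintype V] (hC : D.Cycle4 u v w z)
    (hArc : (D.delVerts {u, v, w, z}).HasArc) :
    D.IsRestrictedArcCut ↑(D.inBoundary {u, v, w, z}) :=
  hC.isRestrictedArcCut (fun _ hp => (mem_inBoundary.1 hp).2.2)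
    (fun _ hp h => ((mem_inBoundary.1 hp).1 h).elim)
    (fun _ hy => hy.2.mem_of_delArcs_inBoundary (by simp)) hArc

variable [Fintype V] [DecidableRel D.Adj]

theorem card_outBoundary_add_four_le (hC : D.Cycle4 u v w z) :
    (D.outBoundary {u, v, w, z}).card + 4 ≤
      D.outDeg u + D.outDeg v + D.outDeg w + D.outDeg z := by
  classical
  obtain ⟨hnd, huv, hvw, hwz, hzu⟩ := cycle4_iff.1 hC
  have := card_outBoundary_add_card_le_sum_outDeg (D := D) {u, v, w, z}
    (B := {(u, v), (v, w), (w, z), (z, u)}) (by simp [huv, hvw, hwz, hzu])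
  simp only [List.nodup_cons, List.mem_cons, List.not_mem_nil, or_false, not_or,
    not_false_eq_true, List.nodup_nil, and_self, and_true] at hnd
  simpa [hnd, Finset.sum_insert, Finset.card_insert_of_notMem, add_assoc] using this

theorem card_inBoundary_add_four_le (hC : D.Cycle4 u v w z) :
    (D.inBoundary {u, v, w, z}).card + 4 ≤
      D.inDeg u + D.inDeg v + D.inDeg w + D.inDeg z := by
  classical
  obtain ⟨hnd, huv, hvw, hwz, hzu⟩ := cycle4_iff.1 hC
  have := card_inBoundary_add_card_le_sum_inDeg (D := D) {u, v, w, z}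
    (B := {(u, v), (v, w), (w, z), (z, u)}) (by simp [huv, hvw, hwz, hzu])
  simp only [List.nodup_cons, List.mem_cons, List.not_mem_nil, or_false, not_or,
    not_false_eq_true, List.nodup_nil, and_self, and_true] at hnd
  simpa [hnd, Finset.sum_insert, Finset.card_insert_of_notMem, add_assoc] using this

end Cycle4

end Digr

theorem stmt4_general {V : Type} [Fintype V] (D : Digr V) [DecidableRel D.Adj]
    (u v w z : V) (hC : D.Cycle4 u v w z)
    (hArc : (D.delVerts {u, v, w, z}).HasArc) :
    D.LambdaPrimeConnected ∧
      (D.lambdaPrime : ℤ) ≤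
        min ((D.outDeg u + D.outDeg v + D.outDeg w + D.outDeg z : ℤ) - 4)
            ((D.inDeg u + D.inDeg v + D.inDeg w + D.inDeg z : ℤ) - 4) := by
  have hout := hC.isRestrictedArcCut_outBoundary hArc
  have hin := hC.isRestrictedArcCut_inBoundary hArc
  have hle_out := Digr.lambdaPrime_le_card hout
  have hle_in := Digr.lambdaPrime_le_card hin
  have hcard_out := hC.card_outBoundary_add_four_le
  have hcard_in := hC.card_inBoundary_add_four_le
  exact ⟨⟨_, hout⟩, le_min (by omega) (by omega)⟩

/-- If `D` is strong of girth 4, `(u,v,w,z,u)` is a 4-cycle and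
`D − {u,v,w,z}` contains an arc, then `D` is λ'-connected and `λ'(D) ≤ ξ(C)`. -/
theorem stmt4 {V : Type} [Fintype V] (D : Digr V) [DecidableRel D.Adj]
    (hO : D.Oriented) (hS : D.StronglyConnected) (hg : D.girth = 4)
    (u v w z : V) (hC : D.Cycle4 u v w z)
    (hArc : (D.delVerts {u, v, w, z}).HasArc) :
    D.LambdaPrimeConnected ∧
      (D.lambdaPrime : ℤ) ≤
        min ((D.outDeg u + D.outDeg v + D.outDeg w + D.outDeg z : ℤ) - 4)
            ((D.inDeg u + D.inDeg v + D.inDeg w + D.inDeg z : ℤ) - 4) :=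
  stmt4_general D u v w z hC hArc
end

section
/- Let D be a strongly connected digraph of girth 4 with vertex set consisting of a 4-cycle (u,v,w,z,u) together with pairwise disjoint sets A, B, C, E of extra vertices such that u→a→v for all a∈A, v→b→w for all b∈B, w→c→z for all c∈C, and z→e→u for all e∈E, and these are all the arcs of D. Then D is not λ'-connected. -/
open Relation in
lemma auxCorner {V : Type} (D : Digr V) (u v w z : V) (A B C E : Set V)
    (huv : u ≠ v) (huw : u ≠ w) (huz : u ≠ z) (hvw : v ≠ w) (hvz : v ≠ z) (hwz : w ≠ z)
    (hA : ∀ a ∈ A, a ≠ u ∧ a ≠ v ∧ a ≠ w ∧ a ≠ z)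
    (hB : ∀ b ∈ B, b ≠ u ∧ b ≠ v ∧ b ≠ w ∧ b ≠ z)
    (hC : ∀ c ∈ C, c ≠ u ∧ c ≠ v ∧ c ≠ w ∧ c ≠ z)
    (hE : ∀ e ∈ E, e ≠ u ∧ e ≠ v ∧ e ≠ w ∧ e ≠ z)
    (hAB : ∀ t, t ∈ A → t ∉ B) (hAC : ∀ t, t ∈ A → t ∉ C) (hAE : ∀ t, t ∈ A → t ∉ E)
    (hBC : ∀ t, t ∈ B → t ∉ C) (hBE : ∀ t, t ∈ B → t ∉ E) (hCE : ∀ t, t ∈ C → t ∉ E)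
    (hAdj : ∀ p q : V, D.Adj p q →
      (p = u ∧ q = v) ∨ (p = v ∧ q = w) ∨ (p = w ∧ q = z) ∨ (p = z ∧ q = u) ∨
      (p = u ∧ q ∈ A) ∨ (p ∈ A ∧ q = v) ∨
      (p = v ∧ q ∈ B) ∨ (p ∈ B ∧ q = w) ∨
      (p = w ∧ q ∈ C) ∨ (p ∈ C ∧ q = z) ∨
      (p = z ∧ q ∈ E) ∨ (p ∈ E ∧ q = u))
    (R : V → V → Prop) (hR : ∀ a b, R a b → D.Adj a b)
    (p q : V) (hpq : R p q) (hqp : Relation.ReflTransGen R q p) :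
    Relation.ReflTransGen R p u ∧ Relation.ReflTransGen R u p := by
  classical
  set g : V → ℕ := fun t =>
    if t = u then 0 else if t ∈ A then 1 else if t = v then 2 else if t ∈ B then 3
    else if t = w then 4 else if t ∈ C then 5 else if t = z then 6 else 7 with hgdef
  have gu : g u = 0 := by simp [hgdef]
  have gA : ∀ a ∈ A, g a = 1 := by
    intro a ha; simp only [hgdef]; rw [if_neg (hA a ha).1, if_pos ha]
  have gv : g v = 2 := by
    have h1 : v ∉ A := fun h => (hA v h).2.1 rfl
    simp only [hgdef]; rw [if_neg (Ne.symm huv), if_neg h1]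
    simp
  have gB : ∀ b ∈ B, g b = 3 := by
    intro b hb
    have h1 : b ∉ A := fun h => hAB b h hb
    simp only [hgdef]; rw [if_neg (hB b hb).1, if_neg h1, if_neg (hB b hb).2.1, if_pos hb]
  have gw : g w = 4 := by
    have h1 : w ∉ A := fun h => (hA w h).2.2.1 rfl
    have h2 : w ∉ B := fun h => (hB w h).2.2.1 rfl
    simp only [hgdef]
    rw [if_neg (Ne.symm huw), if_neg h1, if_neg (Ne.symm hvw), if_neg h2]
    simp
  have gC : ∀ c ∈ C, g c = 5 := by
    intro c hc
    have h1 : c ∉ A := fun h => hAC c h hc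
    have h2 : c ∉ B := fun h => hBC c h hc
    simp only [hgdef]
    rw [if_neg (hC c hc).1, if_neg h1, if_neg (hC c hc).2.1, if_neg h2,
      if_neg (hC c hc).2.2.1, if_pos hc]
  have gz : g z = 6 := by
    have h1 : z ∉ A := fun h => (hA z h).2.2.2 rfl
    have h2 : z ∉ B := fun h => (hB z h).2.2.2 rfl
    have h3 : z ∉ C := fun h => (hC z h).2.2.2 rfl
    simp only [hgdef]
    rw [if_neg (Ne.symm huz), if_neg h1, if_neg (Ne.symm hvz), if_neg h2,
      if_neg (Ne.symm hwz), if_neg h3]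
    simp
  have gE : ∀ e ∈ E, g e = 7 := by
    intro e he
    have h1 : e ∉ A := fun h => hAE e h he
    have h2 : e ∉ B := fun h => hBE e h he
    have h3 : e ∉ C := fun h => hCE e h he
    simp only [hgdef]
    rw [if_neg (hE e he).1, if_neg h1, if_neg (hE e he).2.1, if_neg h2,
      if_neg (hE e he).2.2.1, if_neg h3, if_neg (hE e he).2.2.2]
  have key : ∀ a b, D.Adj a b → a ≠ u → b ≠ u → g a < g b := by
    intro a b hab ha hb
    rcases hAdj a b hab with ⟨h1,h2⟩|⟨h1,h2⟩|⟨h1,h2⟩|⟨h1,h2⟩|⟨h1,h2⟩|⟨h1,h2⟩|⟨h1,h2⟩|⟨h1,h2⟩|⟨h1,h2⟩|⟨h1,h2⟩|⟨h1,h2⟩|⟨h1,h2⟩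
    · exact absurd h1 ha
    · rw [h1, h2, gv, gw]; omega
    · rw [h1, h2, gw, gz]; omega
    · exact absurd h2 hb
    · exact absurd h1 ha
    · rw [gA a h1, h2, gv]; omega
    · rw [h1, gv, gB b h2]; omega
    · rw [gB a h1, h2, gw]; omega
    · rw [h1, gw, gC b h2]; omega
    · rw [gC a h1, h2, gz]; omega
    · rw [h1, gz, gE b h2]; omega
    · exact absurd h2 hb
  have walkU : ∀ s t : V, Relation.ReflTransGen R s t →
      (Relation.ReflTransGen R s u ∧ Relation.ReflTransGen R u t) ∨ g s ≤ g t := by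
    intro s t h
    induction h with
    | refl => exact Or.inr le_rfl
    | @tail b c h1 h2 ih =>
      by_cases hc : c = u
      · subst hc; exact Or.inl ⟨h1.tail h2, Relation.ReflTransGen.refl⟩
      by_cases hb : b = u
      · subst hb; exact Or.inl ⟨h1, Relation.ReflTransGen.single h2⟩
      rcases ih with ⟨h3, h4⟩ | h3
      · exact Or.inl ⟨h3, h4.tail h2⟩
      · exact Or.inr (h3.trans (le_of_lt (key b c (hR b c h2) hb hc)))
  by_cases hp : p = u
  · subst hp; exact ⟨Relation.ReflTransGen.refl, Relation.ReflTransGen.refl⟩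
  by_cases hq : q = u
  · subst hq; exact ⟨Relation.ReflTransGen.single hpq, hqp⟩
  rcases walkU q p hqp with ⟨h3, h4⟩ | h3
  · exact ⟨(Relation.ReflTransGen.single hpq).trans h3, h4⟩
  · have h5 := key p q (hR p q hpq) hp hq
    exact absurd h3 (by omega)

/-- A member of the family H₁ (a 4-cycle `(u,v,w,z,u)` together
with sets A, B, C, E of subdividing vertices) is not λ'-connected. -/
theorem stmt5 {V : Type} (D : Digr V) (u v w z : V) (A B C E : Set V)
    (hnd : [u, v, w, z].Nodup)
    (hdisj : ∀ t ∈ A ∪ B ∪ C ∪ E, t ∉ ({u, v, w, z} : Set V))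
    (hpw : List.Pairwise Disjoint [A, B, C, E])
    (hcov : ∀ t : V, t ∈ ({u, v, w, z} : Set V) ∪ A ∪ B ∪ C ∪ E)
    (hAdj : ∀ p q : V, D.Adj p q ↔
      (p = u ∧ q = v) ∨ (p = v ∧ q = w) ∨ (p = w ∧ q = z) ∨ (p = z ∧ q = u) ∨
      (p = u ∧ q ∈ A) ∨ (p ∈ A ∧ q = v) ∨
      (p = v ∧ q ∈ B) ∨ (p ∈ B ∧ q = w) ∨
      (p = w ∧ q ∈ C) ∨ (p ∈ C ∧ q = z) ∨
      (p = z ∧ q ∈ E) ∨ (p ∈ E ∧ q = u))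
    (hS : D.StronglyConnected) (hg : D.girth = 4) :
    ¬ D.LambdaPrimeConnected := by
  rintro ⟨S, hSadj, X, ⟨x, hX⟩, ⟨u₁, hu₁, v₁, hv₁, harc⟩, a, b, hab⟩
  obtain ⟨huv, huw, huz, hvw, hvz, hwz⟩ : u ≠ v ∧ u ≠ w ∧ u ≠ z ∧ v ≠ w ∧ v ≠ z ∧ w ≠ z := by
    simp only [List.nodup_cons, List.mem_cons, List.not_mem_nil, List.nodup_nil] at hnd
    push_neg at hnd
    tauto
  have hA : ∀ t ∈ A, t ≠ u ∧ t ≠ v ∧ t ≠ w ∧ t ≠ z := by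
    intro t ht
    have h := hdisj t (by simp [ht])
    simp only [Set.mem_insert_iff, Set.mem_singleton_iff, not_or] at h
    tauto
  have hB : ∀ t ∈ B, t ≠ u ∧ t ≠ v ∧ t ≠ w ∧ t ≠ z := by
    intro t ht
    have h := hdisj t (by simp [ht])
    simp only [Set.mem_insert_iff, Set.mem_singleton_iff, not_or] at h
    tauto
  have hC : ∀ t ∈ C, t ≠ u ∧ t ≠ v ∧ t ≠ w ∧ t ≠ z := by
    intro t ht
    have h := hdisj t (by simp [ht])
    simp only [Set.mem_insert_iff, Set.mem_singleton_iff, not_or] at h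
    tauto
  have hE : ∀ t ∈ E, t ≠ u ∧ t ≠ v ∧ t ≠ w ∧ t ≠ z := by
    intro t ht
    have h := hdisj t (by simp [ht])
    simp only [Set.mem_insert_iff, Set.mem_singleton_iff, not_or] at h
    tauto
  obtain ⟨dAB, dAC, dAE, dBC, dBE, dCE⟩ :
      Disjoint A B ∧ Disjoint A C ∧ Disjoint A E ∧ Disjoint B C ∧ Disjoint B E ∧ Disjoint C E := by
    simp only [List.pairwise_cons, List.mem_cons, List.not_mem_nil, List.Pairwise.nil] at hpw
    constructor
    · exact hpw.1 B (by tauto)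
    refine ⟨hpw.1 C (by tauto), hpw.1 E (by tauto), ?_, ?_, ?_⟩
    · exact hpw.2.1 C (by tauto)
    · exact hpw.2.1 E (by tauto)
    · exact hpw.2.2.1 E (by tauto)
  have hAB : ∀ t, t ∈ A → t ∉ B := fun t h1 h2 => Set.disjoint_left.mp dAB h1 h2
  have hAC : ∀ t, t ∈ A → t ∉ C := fun t h1 h2 => Set.disjoint_left.mp dAC h1 h2
  have hAE : ∀ t, t ∈ A → t ∉ E := fun t h1 h2 => Set.disjoint_left.mp dAE h1 h2
  have hBC : ∀ t, t ∈ B → t ∉ C := fun t h1 h2 => Set.disjoint_left.mp dBC h1 h2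
  have hBE : ∀ t, t ∈ B → t ∉ E := fun t h1 h2 => Set.disjoint_left.mp dBE h1 h2
  have hCE : ∀ t, t ∈ C → t ∉ E := fun t h1 h2 => Set.disjoint_left.mp dCE h1 h2
  have hBA : ∀ t, t ∈ B → t ∉ A := fun t h1 h2 => hAB t h2 h1
  have hCA : ∀ t, t ∈ C → t ∉ A := fun t h1 h2 => hAC t h2 h1
  have hEA : ∀ t, t ∈ E → t ∉ A := fun t h1 h2 => hAE t h2 h1
  have hCB : ∀ t, t ∈ C → t ∉ B := fun t h1 h2 => hBC t h2 h1
  have hEB : ∀ t, t ∈ E → t ∉ B := fun t h1 h2 => hBE t h2 h1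
  have hEC : ∀ t, t ∈ E → t ∉ C := fun t h1 h2 => hCE t h2 h1
  have hAdjv : ∀ p q : V, D.Adj p q → ((p = v ∧ q = w) ∨ (p = w ∧ q = z) ∨ (p = z ∧ q = u) ∨ (p = u ∧ q = v) ∨ (p = v ∧ q ∈ B) ∨ (p ∈ B ∧ q = w) ∨ (p = w ∧ q ∈ C) ∨ (p ∈ C ∧ q = z) ∨ (p = z ∧ q ∈ E) ∨ (p ∈ E ∧ q = u) ∨ (p = u ∧ q ∈ A) ∨ (p ∈ A ∧ q = v)) := by
    intro p q h
    rcases (hAdj p q).mp h with h|h|h|h|h|h|h|h|h|h|h|h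
    · exact Or.inr (Or.inr (Or.inr (Or.inl h)))
    · exact Or.inl h
    · exact Or.inr (Or.inl h)
    · exact Or.inr (Or.inr (Or.inl h))
    · exact Or.inr (Or.inr (Or.inr (Or.inr (Or.inr (Or.inr (Or.inr (Or.inr (Or.inr (Or.inr (Or.inl h))))))))))
    · exact Or.inr (Or.inr (Or.inr (Or.inr (Or.inr (Or.inr (Or.inr (Or.inr (Or.inr (Or.inr (Or.inr (h)))))))))))
    · exact Or.inr (Or.inr (Or.inr (Or.inr (Or.inl h))))
    · exact Or.inr (Or.inr (Or.inr (Or.inr (Or.inr (Or.inl h)))))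
    · exact Or.inr (Or.inr (Or.inr (Or.inr (Or.inr (Or.inr (Or.inl h))))))
    · exact Or.inr (Or.inr (Or.inr (Or.inr (Or.inr (Or.inr (Or.inr (Or.inl h)))))))
    · exact Or.inr (Or.inr (Or.inr (Or.inr (Or.inr (Or.inr (Or.inr (Or.inr (Or.inl h))))))))
    · exact Or.inr (Or.inr (Or.inr (Or.inr (Or.inr (Or.inr (Or.inr (Or.inr (Or.inr (Or.inl h)))))))))
  have hAdjw : ∀ p q : V, D.Adj p q → ((p = w ∧ q = z) ∨ (p = z ∧ q = u) ∨ (p = u ∧ q = v) ∨ (p = v ∧ q = w) ∨ (p = w ∧ q ∈ C) ∨ (p ∈ C ∧ q = z) ∨ (p = z ∧ q ∈ E) ∨ (p ∈ E ∧ q = u) ∨ (p = u ∧ q ∈ A) ∨ (p ∈ A ∧ q = v) ∨ (p = v ∧ q ∈ B) ∨ (p ∈ B ∧ q = w)) := by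
    intro p q h
    rcases (hAdj p q).mp h with h|h|h|h|h|h|h|h|h|h|h|h
    · exact Or.inr (Or.inr (Or.inl h))
    · exact Or.inr (Or.inr (Or.inr (Or.inl h)))
    · exact Or.inl h
    · exact Or.inr (Or.inl h)
    · exact Or.inr (Or.inr (Or.inr (Or.inr (Or.inr (Or.inr (Or.inr (Or.inr (Or.inl h))))))))
    · exact Or.inr (Or.inr (Or.inr (Or.inr (Or.inr (Or.inr (Or.inr (Or.inr (Or.inr (Or.inl h)))))))))
    · exact Or.inr (Or.inr (Or.inr (Or.inr (Or.inr (Or.inr (Or.inr (Or.inr (Or.inr (Or.inr (Or.inl h))))))))))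
    · exact Or.inr (Or.inr (Or.inr (Or.inr (Or.inr (Or.inr (Or.inr (Or.inr (Or.inr (Or.inr (Or.inr (h)))))))))))
    · exact Or.inr (Or.inr (Or.inr (Or.inr (Or.inl h))))
    · exact Or.inr (Or.inr (Or.inr (Or.inr (Or.inr (Or.inl h)))))
    · exact Or.inr (Or.inr (Or.inr (Or.inr (Or.inr (Or.inr (Or.inl h))))))
    · exact Or.inr (Or.inr (Or.inr (Or.inr (Or.inr (Or.inr (Or.inr (Or.inl h)))))))
  have hAdjz : ∀ p q : V, D.Adj p q → ((p = z ∧ q = u) ∨ (p = u ∧ q = v) ∨ (p = v ∧ q = w) ∨ (p = w ∧ q = z) ∨ (p = z ∧ q ∈ E) ∨ (p ∈ E ∧ q = u) ∨ (p = u ∧ q ∈ A) ∨ (p ∈ A ∧ q = v) ∨ (p = v ∧ q ∈ B) ∨ (p ∈ B ∧ q = w) ∨ (p = w ∧ q ∈ C) ∨ (p ∈ C ∧ q = z)) := by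
    intro p q h
    rcases (hAdj p q).mp h with h|h|h|h|h|h|h|h|h|h|h|h
    · exact Or.inr (Or.inl h)
    · exact Or.inr (Or.inr (Or.inl h))
    · exact Or.inr (Or.inr (Or.inr (Or.inl h)))
    · exact Or.inl h
    · exact Or.inr (Or.inr (Or.inr (Or.inr (Or.inr (Or.inr (Or.inl h))))))
    · exact Or.inr (Or.inr (Or.inr (Or.inr (Or.inr (Or.inr (Or.inr (Or.inl h)))))))
    · exact Or.inr (Or.inr (Or.inr (Or.inr (Or.inr (Or.inr (Or.inr (Or.inr (Or.inl h))))))))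
    · exact Or.inr (Or.inr (Or.inr (Or.inr (Or.inr (Or.inr (Or.inr (Or.inr (Or.inr (Or.inl h)))))))))
    · exact Or.inr (Or.inr (Or.inr (Or.inr (Or.inr (Or.inr (Or.inr (Or.inr (Or.inr (Or.inr (Or.inl h))))))))))
    · exact Or.inr (Or.inr (Or.inr (Or.inr (Or.inr (Or.inr (Or.inr (Or.inr (Or.inr (Or.inr (Or.inr (h)))))))))))
    · exact Or.inr (Or.inr (Or.inr (Or.inr (Or.inl h))))
    · exact Or.inr (Or.inr (Or.inr (Or.inr (Or.inr (Or.inl h)))))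
  set R := (D.delArcs ↑S).Adj with hRdef
  have hR : ∀ a b, R a b → D.Adj a b := fun a b h => h.1
  have hxu₁ : (D.delArcs ↑S).MReach x u₁ := by rw [hX] at hu₁; exact hu₁
  have hxv₁ : (D.delArcs ↑S).MReach x v₁ := by rw [hX] at hv₁; exact hv₁
  have hv₁u₁ : Relation.ReflTransGen R v₁ u₁ := Relation.ReflTransGen.trans hxv₁.2 hxu₁.1
  have harc' : R u₁ v₁ := harc
  -- corner u
  have hcu := auxCorner D u v w z A B C E huv huw huz hvw hvz hwz hA hB hC hE
    hAB hAC hAE hBC hBE hCE (fun p q h => (hAdj p q).mp h) R hR u₁ v₁ harc' hv₁u₁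
  -- corner v
  have hcv := auxCorner D v w z u B C E A hvw hvz huv.symm hwz huw.symm huz.symm
    (fun t ht => by have := hB t ht; tauto) (fun t ht => by have := hC t ht; tauto)
    (fun t ht => by have := hE t ht; tauto) (fun t ht => by have := hA t ht; tauto)
    hBC hBE hBA hCE hCA hEA
    hAdjv R hR u₁ v₁ harc' hv₁u₁
  -- corner w
  have hcw := auxCorner D w z u v C E A B hwz huw.symm hvw.symm huz.symm hvz.symm huv
    (fun t ht => by have := hC t ht; tauto) (fun t ht => by have := hE t ht; tauto)
    (fun t ht => by have := hA t ht; tauto) (fun t ht => by have := hB t ht; tauto)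
    hCE hCA hCB hEA hEB hAB
    hAdjw R hR u₁ v₁ harc' hv₁u₁
  -- corner z
  have hcz := auxCorner D z u v w E A B C huz.symm hvz.symm hwz.symm huv huw hvw
    (fun t ht => by have := hE t ht; tauto) (fun t ht => by have := hA t ht; tauto)
    (fun t ht => by have := hB t ht; tauto) (fun t ht => by have := hC t ht; tauto)
    hEA hEB hEC hAB hAC hBC
    hAdjz R hR u₁ v₁ harc' hv₁u₁
  have hXmem : ∀ t : V, Relation.ReflTransGen R u₁ t → Relation.ReflTransGen R t u₁ → t ∈ X := by
    intro t h1 h2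
    rw [hX]
    exact ⟨Relation.ReflTransGen.trans hxu₁.1 h1, Relation.ReflTransGen.trans h2 hxu₁.2⟩
  have huX : u ∈ X := hXmem u hcu.1 hcu.2
  have hvX : v ∈ X := hXmem v hcv.1 hcv.2
  have hwX : w ∈ X := hXmem w hcw.1 hcw.2
  have hzX : z ∈ X := hXmem z hcz.1 hcz.2
  obtain ⟨hadj, haX, hbX⟩ := hab
  rcases (hAdj a b).mp hadj with ⟨h,-⟩|⟨h,-⟩|⟨h,-⟩|⟨h,-⟩|⟨h,-⟩|⟨-,h⟩|⟨h,-⟩|⟨-,h⟩|⟨h,-⟩|⟨-,h⟩|⟨h,-⟩|⟨-,h⟩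
  · exact haX (h ▸ huX)
  · exact haX (h ▸ hvX)
  · exact haX (h ▸ hwX)
  · exact haX (h ▸ hzX)
  · exact haX (h ▸ huX)
  · exact hbX (h ▸ hvX)
  · exact haX (h ▸ hvX)
  · exact hbX (h ▸ hwX)
  · exact haX (h ▸ hwX)
  · exact hbX (h ▸ hzX)
  · exact haX (h ▸ hzX)
  · exact hbX (h ▸ huX)
end

section
/- Let D be the digraph on vertex set {u,v,w,z,x} ∪ A ∪ B (A, B disjoint sets of extra vertices, possibly empty) whose arcs are exactly those of the 4-cycles (u,v,w,z,u) and (u,v,w,x,u), together with w→a and a→u for every a∈A, and u→b and b→w for every b∈B. Then D is strongly connected of girth 4 but D is not λ'-connected. -/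
/-! Grade the vertices of `D` by `h2Level`: `u ↦ 0`, `v` and `B ↦ 1`, `w ↦ 2`, `z`, `x` and
`A ↦ 3`. Every arc raises the level by one modulo 4, so every cycle has length divisible by 4,
and `(u, v, w, z)` shows that the girth is 4. As `u` and `w` are alone on their levels, every
cycle passes through both of them; hence so does every non-trivial strong component of
`D - S`, for any arc set `S`. Since every arc of `D` meets `u` or `w`, deleting such a
component leaves no arc. -/
theorem ZMod.val_lt_val_add_one {n : ℕ} [NeZero n] {x : ZMod n} (hx : x + 1 ≠ 0) :
    x.val < (x + 1).val := by
  obtain ⟨k, rfl⟩ := Nat.exists_eq_succ_of_ne_zero (NeZero.ne n)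
  revert x
  intro (x : Fin (k + 1)) hx
  change x.val < (x + 1).val
  rw [Fin.val_add_one]
  split_ifs with h
  · exact absurd (h ▸ Fin.last_add_one k) hx
  · omega

namespace Digr

variable {V : Type} {n : ℕ}

/-- `ℓ` is a homomorphism from `D` to the directed cycle on `ZMod n`. -/
def IsCycleHom (D : Digr V) (ℓ : V → ZMod n) : Prop :=
  ∀ a b, D.Adj a b → ℓ b = ℓ a + 1

namespace IsCycleHom

variable {D : Digr V} {ℓ : V → ZMod n}

theorem delArcs (h : D.IsCycleHom ℓ) (S : Set (V × V)) : (D.delArcs S).IsCycleHom ℓ :=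
  fun a b hab => h a b hab.1

theorem getLast_eq (h : D.IsCycleHom ℓ) :
    ∀ (l : List V) (hl : l ≠ []), l.IsChain D.Adj →
      ℓ (l.getLast hl) = ℓ (l.head hl) + (l.length - 1 : ℕ)
  | [_], _, _ => by simp
  | a :: b :: l, _, hchain => by
    rw [List.isChain_cons_cons] at hchain
    rw [List.getLast_cons (List.cons_ne_nil b l), h.getLast_eq (b :: l) (List.cons_ne_nil b l)
      hchain.2, List.head_cons, List.head_cons, h a b hchain.1]
    simp only [List.length_cons, Nat.add_sub_cancel, Nat.cast_add, Nat.cast_one]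
    ring

theorem dvd_length (h : D.IsCycleHom ℓ) {l : List V} (hl : D.IsCycleList l) : n ∣ l.length := by
  obtain ⟨hne, -, hchain, hclose⟩ := hl
  obtain ⟨k, hk⟩ := Nat.exists_eq_add_one_of_ne_zero (List.length_pos_iff.mpr hne).ne'
  have hcycle := h _ _ hclose
  rw [h.getLast_eq l hne hchain, add_assoc, left_eq_add, hk, Nat.add_sub_cancel,
    ← Nat.cast_add_one] at hcycle
  rwa [hk, ← ZMod.natCast_eq_zero_iff]

theorem girth_eq (h : D.IsCycleHom ℓ) {l : List V} (hl : D.IsCycleList l)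
    (hlen : l.length = n) : D.girth = n := by
  refine le_antisymm (Nat.sInf_le ⟨l, hl, hlen⟩) (le_csInf ⟨n, l, hl, hlen⟩ ?_)
  rintro m ⟨l', hl', rfl⟩
  exact Nat.le_of_dvd (List.length_pos_iff.mpr hl'.1) (h.dvd_length hl')

variable [NeZero n] {c : V}

theorem val_sub_lt_val_sub (h : D.IsCycleHom ℓ) (hc : ∀ t, ℓ t = ℓ c → t = c) {a b : V}
    (hab : D.Adj a b) (hb : b ≠ c) : (ℓ a - ℓ c).val < (ℓ b - ℓ c).val := by
  have hlevel : ℓ b - ℓ c = ℓ a - ℓ c + 1 := by rw [h a b hab]; ring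
  rw [hlevel]
  refine ZMod.val_lt_val_add_one fun h0 => hb (hc b ?_)
  rwa [← hlevel, sub_eq_zero] at h0

theorem reach_through_or_le (h : D.IsCycleHom ℓ) (hc : ∀ t, ℓ t = ℓ c → t = c) {s t : V}
    (hst : D.Reach s t) :
    (D.Reach s c ∧ D.Reach c t) ∨ (ℓ s - ℓ c).val ≤ (ℓ t - ℓ c).val := by
  induction hst with
  | refl => exact Or.inr le_rfl
  | @tail b b' hsb hbb' ih =>
    by_cases hb' : b' = c
    · subst hb'
      exact Or.inl ⟨hsb.tail hbb', .refl⟩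
    rcases ih with ⟨hsc, hcb⟩ | hle
    · exact Or.inl ⟨hsc, hcb.tail hbb'⟩
    · exact Or.inr (hle.trans (h.val_sub_lt_val_sub hc hbb' hb').le)

theorem mreach_of_adj_of_reach (h : D.IsCycleHom ℓ) (hc : ∀ t, ℓ t = ℓ c → t = c) {p q : V}
    (hpq : D.Adj p q) (hqp : D.Reach q p) : D.MReach p c := by
  by_cases hq : q = c
  · subst hq
    exact ⟨.single hpq, hqp⟩
  rcases h.reach_through_or_le hc hqp with ⟨hqc, hcp⟩ | hle
  · exact ⟨hqc.head hpq, hcp⟩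
  · exact absurd hle (h.val_sub_lt_val_sub hc hpq hq).not_ge

theorem mem_of_isStrongComponent (h : D.IsCycleHom ℓ) (hc : ∀ t, ℓ t = ℓ c → t = c)
    {X : Set V} (hX : D.IsStrongComponent X) {p q : V} (hp : p ∈ X) (hq : q ∈ X)
    (hpq : D.Adj p q) : c ∈ X := by
  obtain ⟨x₀, rfl⟩ := hX
  obtain ⟨hpc, hcp⟩ := h.mreach_of_adj_of_reach hc hpq (hq.2.trans hp.1)
  exact ⟨hp.1.trans hpc, hcp.trans hp.2⟩

theorem not_lambdaPrimeConnected (h : D.IsCycleHom ℓ) {C : Set V}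
    (hC : ∀ c ∈ C, ∀ t, ℓ t = ℓ c → t = c) (hcover : ∀ a b, D.Adj a b → a ∈ C ∨ b ∈ C) :
    ¬ D.LambdaPrimeConnected := by
  rintro ⟨S, -, X, hX, ⟨p, hp, q, hq, hpq⟩, a, b, hab, haX, hbX⟩
  have hCX : C ⊆ X := fun c hcC =>
    (h.delArcs S).mem_of_isStrongComponent (hC c hcC) hX hp hq hpq
  rcases hcover a b hab with ha | hb
  exacts [haX (hCX ha), hbX (hCX hb)]

end IsCycleHom

def IsH2 (D : Digr V) (u v w z x : V) (A B : Set V) : Prop :=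
  ∀ p q : V, D.Adj p q ↔
    (p = u ∧ q = v) ∨ (p = v ∧ q = w) ∨ (p = w ∧ q = z) ∨ (p = z ∧ q = u) ∨
    (p = w ∧ q = x) ∨ (p = x ∧ q = u) ∨
    (p = w ∧ q ∈ A) ∨ (p ∈ A ∧ q = u) ∨
    (p = u ∧ q ∈ B) ∨ (p ∈ B ∧ q = w)

open Classical in
noncomputable def h2Level (u v w : V) (B : Set V) (t : V) : ZMod 4 :=
  if t = u then 0 else if t = v then 1 else if t = w then 2 else if t ∈ B then 1 else 3

section H2

variable {D : Digr V} {u v w z x : V} {A B : Set V}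

theorem eq_u_of_h2Level_eq {t : V} (ht : h2Level u v w B t = h2Level u v w B u) : t = u := by
  unfold h2Level at ht
  split_ifs at ht <;> first | assumption | exact absurd ht (by decide) | simp_all

theorem eq_w_of_h2Level_eq (hvw : v ≠ w) (huw : u ≠ w) {t : V}
    (ht : h2Level u v w B t = h2Level u v w B w) : t = w := by
  unfold h2Level at ht
  split_ifs at ht <;> first | assumption | exact absurd ht (by decide) | simp_all

theorem IsH2.isCycleHom (hD : D.IsH2 u v w z x A B) (hnd : [u, v, w, z, x].Nodup)
    (hdisj : ∀ t ∈ A ∪ B, t ∉ ({u, v, w, z, x} : Set V)) (hAB : Disjoint A B) :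
    D.IsCycleHom (h2Level u v w B) := by
  simp only [List.nodup_cons, List.mem_cons, List.not_mem_nil, or_false, not_or,
    List.nodup_nil, and_true] at hnd
  obtain ⟨⟨huv, huw, huz, hux⟩, ⟨hvw, hvz, hvx⟩, ⟨hwz, hwx⟩, -⟩ := hnd
  have hA : ∀ t ∈ A, t ≠ u ∧ t ≠ v ∧ t ≠ w ∧ t ∉ B := fun t ht => by
    have := hdisj t (Or.inl ht)
    simp_all [Set.disjoint_left.mp hAB ht]
  have hB : ∀ t ∈ B, t ≠ u ∧ t ≠ v ∧ t ≠ w := fun t ht => by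
    have := hdisj t (Or.inr ht)
    simp_all
  have hzB : z ∉ B := fun h => by simpa using hdisj z (Or.inr h)
  have hxB : x ∉ B := fun h => by simpa using hdisj x (Or.inr h)
  have hℓu : h2Level u v w B u = 0 := if_pos rfl
  have hℓv : h2Level u v w B v = 1 := by simp [h2Level, Ne.symm huv]
  have hℓw : h2Level u v w B w = 2 := by simp [h2Level, Ne.symm huw, Ne.symm hvw]
  have hℓz : h2Level u v w B z = 3 := by
    simp [h2Level, Ne.symm huz, Ne.symm hvz, Ne.symm hwz, hzB]
  have hℓx : h2Level u v w B x = 3 := by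
    simp [h2Level, Ne.symm hux, Ne.symm hvx, Ne.symm hwx, hxB]
  have hℓA : ∀ t ∈ A, h2Level u v w B t = 3 := fun t ht => by simp [h2Level, hA t ht]
  have hℓB : ∀ t ∈ B, h2Level u v w B t = 1 := fun t ht => by simp [h2Level, hB t ht, ht]
  intro a b hab
  rcases (hD a b).1 hab with ⟨rfl, rfl⟩ | ⟨rfl, rfl⟩ | ⟨rfl, rfl⟩ | ⟨rfl, rfl⟩ |
    ⟨rfl, rfl⟩ | ⟨rfl, rfl⟩ | ⟨rfl, hb⟩ | ⟨ha, rfl⟩ | ⟨rfl, hb⟩ | ⟨ha, rfl⟩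
  · rw [hℓu, hℓv]; decide
  · rw [hℓv, hℓw]; decide
  · rw [hℓw, hℓz]; decide
  · rw [hℓz, hℓu]; decide
  · rw [hℓw, hℓx]; decide
  · rw [hℓx, hℓu]; decide
  · rw [hℓw, hℓA b hb]; decide
  · rw [hℓA a ha, hℓu]; decide
  · rw [hℓu, hℓB b hb]; decide
  · rw [hℓB a ha, hℓw]; decide

theorem IsH2.stronglyConnected (hD : D.IsH2 u v w z x A B)
    (hcov : ∀ t : V, t ∈ ({u, v, w, z, x} : Set V) ∪ A ∪ B) : D.StronglyConnected := by
  have hwu : D.Reach w u := .head ((hD w z).2 (by simp)) (.single ((hD z u).2 (by simp)))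
  have huw : D.Reach u w := .head ((hD u v).2 (by simp)) (.single ((hD v w).2 (by simp)))
  have to_u : ∀ t, D.Reach t u := by
    intro t
    rcases hcov t with ((rfl | rfl | rfl | rfl | rfl) | ht) | ht
    · exact .refl
    · exact .head ((hD _ _).2 (by simp)) hwu
    · exact hwu
    · exact .single ((hD _ _).2 (by simp))
    · exact .single ((hD _ _).2 (by simp))
    · exact .single ((hD _ _).2 (by simp [ht]))
    · exact .head ((hD _ _).2 (by simp [ht])) hwu
  have from_u : ∀ t, D.Reach u t := by
    intro t
    rcases hcov t with ((rfl | rfl | rfl | rfl | rfl) | ht) | ht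
    · exact .refl
    · exact .single ((hD _ _).2 (by simp))
    · exact huw
    · exact huw.tail ((hD _ _).2 (by simp))
    · exact huw.tail ((hD _ _).2 (by simp))
    · exact huw.tail ((hD _ _).2 (by simp [ht]))
    · exact .single ((hD _ _).2 (by simp [ht]))
  exact fun s t => (to_u s).trans (from_u t)

theorem IsH2.isCycleList (hD : D.IsH2 u v w z x A B) (hnd : [u, v, w, z, x].Nodup) :
    D.IsCycleList [u, v, w, z] :=
  ⟨List.cons_ne_nil _ _, hnd.sublist (List.sublist_append_left [u, v, w, z] [x]),
    .cons_cons ((hD u v).2 (by simp)) (.cons_cons ((hD v w).2 (by simp))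
      (.cons_cons ((hD w z).2 (by simp)) (.singleton z))), (hD z u).2 (by simp)⟩

theorem IsH2.mem_or_mem (hD : D.IsH2 u v w z x A B) {a b : V} (hab : D.Adj a b) :
    a ∈ ({u, w} : Set V) ∨ b ∈ ({u, w} : Set V) := by
  rcases (hD a b).1 hab with ⟨rfl, -⟩ | ⟨-, rfl⟩ | ⟨rfl, -⟩ | ⟨-, rfl⟩ | ⟨rfl, -⟩ | ⟨-, rfl⟩ |
    ⟨rfl, -⟩ | ⟨-, rfl⟩ | ⟨rfl, -⟩ | ⟨-, rfl⟩ <;> simp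

end H2

end Digr

/-- A member of the family H₂ is strongly connected of girth 4 but
not λ'-connected. -/
theorem stmt6 {V : Type} (D : Digr V) (u v w z x : V) (A B : Set V)
    (hnd : [u, v, w, z, x].Nodup)
    (hdisj : ∀ t ∈ A ∪ B, t ∉ ({u, v, w, z, x} : Set V))
    (hAB : Disjoint A B)
    (hcov : ∀ t : V, t ∈ ({u, v, w, z, x} : Set V) ∪ A ∪ B)
    (hAdj : ∀ p q : V, D.Adj p q ↔
      (p = u ∧ q = v) ∨ (p = v ∧ q = w) ∨ (p = w ∧ q = z) ∨ (p = z ∧ q = u) ∨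
      (p = w ∧ q = x) ∨ (p = x ∧ q = u) ∨
      (p = w ∧ q ∈ A) ∨ (p ∈ A ∧ q = u) ∨
      (p = u ∧ q ∈ B) ∨ (p ∈ B ∧ q = w)) :
    D.StronglyConnected ∧ D.girth = 4 ∧ ¬ D.LambdaPrimeConnected := by
  have hD : D.IsH2 u v w z x A B := hAdj
  have hℓ := hD.isCycleHom hnd hdisj hAB
  have hvw : v ≠ w := fun h => by simp [h] at hnd
  have huw : u ≠ w := fun h => by simp [h] at hnd
  refine ⟨hD.stronglyConnected hcov, hℓ.girth_eq (hD.isCycleList hnd) rfl,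
    hℓ.not_lambdaPrimeConnected ?_ fun a b => hD.mem_or_mem⟩
  rintro c (rfl | rfl) t ht
  exacts [Digr.eq_u_of_h2Level_eq ht, Digr.eq_w_of_h2Level_eq hvw huw ht]
end

section
/- Let D be the digraph on vertices {u,v,w,z,x} ∪ A (A possibly empty) whose arcs are exactly those of the 4-cycles (u,v,w,z,u) and (u,v,w,x,u), an arc between x and z (in either one fixed direction), plus u→a and a→w for every a ∈ A. Then D is strongly connected with girth 4 and is not λ'-connected. -/
/-
Sending every vertex of `A` to `v` is a homomorphism from `D` onto the five-vertex member `h5`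
of H₅. Since `h5` has no closed walk of length at most three, neither has `D`, so the 4-cycle
`u v w z` realises the girth. Since `h5 - u`, `h5 - w` and `h5 - {z, x}` are acyclic, every closed
walk of a subdigraph of `D` passes through `u`, `w` and one of `z`, `x`. Hence after deleting any
arcs, a strong component containing an arc contains `u`, `w` and `z` or `x`, and every arc of `D`
has an endpoint in it: no restricted arc-cut exists.
-/

open Relation

theorem Relation.TransGen.exists_mem_of_rank {α β : Type*} [Preorder β] {r : α → α → Prop}
    {s : Set α} (f : α → β) (hf : ∀ ⦃p q⦄, r p q → p ∉ s → q ∉ s → f p < f q) {a : α}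
    (ha : TransGen r a a) : ∃ c ∈ s, ReflTransGen r a c ∧ ReflTransGen r c a := by
  by_contra! hs
  have hlt : ∀ {p q}, TransGen r p q → ReflTransGen r a p → ReflTransGen r q a → f p < f q := by
    intro p q hpq
    induction hpq with
    | single hpq =>
      exact fun hap hqa => hf hpq (fun hp => hs _ hp hap (.head hpq hqa))
        (fun hq => hs _ hq (hap.tail hpq) hqa)
    | @tail m q hpm hmq ih =>
      intro hap hqa
      have ham : ReflTransGen r a m := hap.trans hpm.to_reflTransGen
      exact (ih hap (.head hmq hqa)).trans
        (hf hmq (fun hm => hs _ hm ham (.head hmq hqa)) (fun hq => hs _ hq (ham.tail hmq) hqa))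
  exact lt_irrefl _ (hlt ha .refl .refl)

namespace Digr

variable {V W : Type}

def IsHom (D : Digr V) (H : Digr W) (φ : V → W) : Prop :=
  ∀ ⦃p q⦄, D.Adj p q → H.Adj (φ p) (φ q)

def TriangleFree (D : Digr V) : Prop :=
  ∀ p q r, D.Adj p q → D.Adj q r → ¬ D.Adj r p

namespace IsHom

variable {D : Digr V} {H : Digr W} {φ : V → W}

theorem delArcs (hφ : IsHom D H φ) (S : Set (V × V)) : IsHom (D.delArcs S) H φ :=
  fun _ _ hpq => hφ hpq.1

theorem oriented (hφ : IsHom D H φ) (hH : H.Oriented) : D.Oriented :=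
  fun _ _ hpq hqp => hH _ _ (hφ hpq) (hφ hqp)

theorem triangleFree (hφ : IsHom D H φ) (hH : H.TriangleFree) : D.TriangleFree :=
  fun _ _ _ hpq hqr hrp => hH _ _ _ (hφ hpq) (hφ hqr) (hφ hrp)

theorem exists_mReach_of_rank (hφ : IsHom D H φ) {s : Set W} (rank : W → ℕ)
    (hrank : ∀ ⦃i j⦄, H.Adj i j → i ∉ s → j ∉ s → rank i < rank j) {a : V}
    (ha : TransGen D.Adj a a) : ∃ c, φ c ∈ s ∧ D.MReach a c := by
  obtain ⟨c, hc, hac, hca⟩ :=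
    ha.exists_mem_of_rank (s := φ ⁻¹' s) (rank ∘ φ) fun _ _ hpq hp hq => hrank (hφ hpq) hp hq
  exact ⟨c, hc, hac, hca⟩

end IsHom

theorem four_le_length_of_isCycleList {D : Digr V} (ho : D.Oriented) (ht : D.TriangleFree)
    {l : List V} (hl : D.IsCycleList l) : 4 ≤ l.length := by
  obtain ⟨hne, -, (hchain : l.IsChain D.Adj), hlast⟩ := hl
  rcases l with _ | ⟨p, _ | ⟨q, _ | ⟨r, _ | ⟨s, l⟩⟩⟩⟩
  · exact absurd rfl hne
  · simp only [List.getLast_singleton, List.head_cons] at hlast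
    exact absurd hlast (ho p p hlast)
  · simp only [List.isChain_pair] at hchain
    exact absurd hlast (ho p q hchain)
  · simp only [List.isChain_cons_cons, List.isChain_singleton, and_true] at hchain
    exact absurd hlast (ht p q r hchain.1 hchain.2)
  · simp

theorem girth_eq_four {D : Digr V} {u v w z : V} (hC : D.Cycle4 u v w z) (ho : D.Oriented)
    (ht : D.TriangleFree) : D.girth = 4 :=
  le_antisymm (Nat.sInf_le ⟨_, hC, rfl⟩)
    (le_csInf ⟨4, _, hC, rfl⟩ fun _ ⟨_, hl, hn⟩ => hn ▸ four_le_length_of_isCycleList ho ht hl)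

theorem not_lambdaPrimeConnected_of_forall_delArcs {D : Digr V}
    (h : ∀ S a, TransGen (D.delArcs S).Adj a a → ∀ p q, D.Adj p q →
      (D.delArcs S).MReach a p ∨ (D.delArcs S).MReach a q) :
    ¬ D.LambdaPrimeConnected := by
  rintro ⟨S, -, X, ⟨x₀, rfl⟩, ⟨a, ha, b, hb, hab⟩, p, q, hpq, hp, hq⟩
  have hX : ∀ c, (D.delArcs S).MReach a c → (D.delArcs S).MReach x₀ c :=
    fun c hc => ⟨ha.1.trans hc.1, hc.2.trans ha.2⟩
  rcases h S a (.head' hab (hb.2.trans ha.1)) p q hpq with hap | haq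
  exacts [hp (hX p hap), hq (hX q haq)]

/-- `u v w z x` are `0 1 2 3 4`, `A` is empty and the arc between `z` and `x` is `x → z`. -/
def h5Arcs : List (Fin 5 × Fin 5) := [(0, 1), (1, 2), (2, 3), (3, 0), (2, 4), (4, 0), (4, 3)]

def h5 : Digr (Fin 5) := ⟨fun i j => (i, j) ∈ h5Arcs⟩

instance : DecidableRel h5.Adj := fun i j => inferInstanceAs (Decidable ((i, j) ∈ h5Arcs))

theorem h5_oriented : h5.Oriented := by
  unfold Oriented; decide

theorem h5_triangleFree : h5.TriangleFree := by
  unfold TriangleFree; decide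

open Classical in
noncomputable def h5Label (u w z x t : V) : Fin 5 :=
  if t = u then 0 else if t = w then 2 else if t = z then 3 else if t = x then 4 else 1

theorem eq_of_h5Label_eq {u v w z x t : V} {i : Fin 5} (ht : h5Label u w z x t = i) (hi : i ≠ 1) :
    t = ![u, v, w, z, x] i := by
  subst ht
  unfold h5Label at hi ⊢
  split_ifs at hi ⊢ <;> first | exact absurd rfl hi | simp_all

structure IsH5 (D : Digr V) (u v w z x : V) (A : Set V) : Prop where
  nodup : [u, v, w, z, x].Nodup
  not_mem : ∀ a ∈ A, a ∉ ({u, v, w, z, x} : Set V)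
  cover : ∀ t, t = u ∨ t = v ∨ t = w ∨ t = z ∨ t = x ∨ t ∈ A
  adj : ∀ p q, D.Adj p q ↔
    (p = u ∧ q = v) ∨ (p = v ∧ q = w) ∨ (p = w ∧ q = z) ∨ (p = z ∧ q = u) ∨
    (p = w ∧ q = x) ∨ (p = x ∧ q = u) ∨ (p = x ∧ q = z) ∨ (p = u ∧ q ∈ A) ∨ (p ∈ A ∧ q = w)

namespace IsH5

variable {D : Digr V} {u v w z x : V} {A : Set V}

theorem h5Label_eq (h : IsH5 D u v w z x A) :
    h5Label u w z x u = 0 ∧ h5Label u w z x v = 1 ∧ h5Label u w z x w = 2 ∧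
    h5Label u w z x z = 3 ∧ h5Label u w z x x = 4 ∧ ∀ a ∈ A, h5Label u w z x a = 1 := by
  have hnd := h.nodup
  simp only [List.nodup_cons, List.mem_cons, List.not_mem_nil, or_false, List.nodup_nil,
    and_true, not_or] at hnd
  obtain ⟨⟨huv, huw, huz, hux⟩, ⟨hvw, hvz, hvx⟩, ⟨hwz, hwx⟩, hzx, -⟩ := hnd
  refine ⟨by simp [h5Label], ?_, ?_, ?_, ?_, fun a ha => ?_⟩
  · simp [h5Label, Ne.symm huv, hvw, hvz, hvx]
  · simp [h5Label, Ne.symm huw]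
  · simp [h5Label, Ne.symm huz, Ne.symm hwz]
  · simp [h5Label, Ne.symm hux, Ne.symm hwx, Ne.symm hzx]
  · have := h.not_mem a ha
    simp only [Set.mem_insert_iff, Set.mem_singleton_iff, not_or] at this
    simp [h5Label, this]

theorem isHom (h : IsH5 D u v w z x A) : IsHom D h5 (h5Label u w z x) := by
  obtain ⟨hu, hv, hw, hz, hx, hA⟩ := h.h5Label_eq
  intro p q hpq
  rcases (h.adj p q).1 hpq with ⟨rfl, rfl⟩ | ⟨rfl, rfl⟩ | ⟨rfl, rfl⟩ | ⟨rfl, rfl⟩ | ⟨rfl, rfl⟩ |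
    ⟨rfl, rfl⟩ | ⟨rfl, rfl⟩ | ⟨rfl, hq⟩ | ⟨hp, rfl⟩ <;>
    simp (disch := assumption) only [hu, hv, hw, hz, hx, hA] <;> decide

theorem stronglyConnected (h : IsH5 D u v w z x A) : D.StronglyConnected := by
  have huv : D.Adj u v := (h.adj u v).2 (by simp)
  have hvw : D.Adj v w := (h.adj v w).2 (by simp)
  have hwz : D.Adj w z := (h.adj w z).2 (by simp)
  have hzu : D.Adj z u := (h.adj z u).2 (by simp)
  have hwx : D.Adj w x := (h.adj w x).2 (by simp)
  have hxu : D.Adj x u := (h.adj x u).2 (by simp)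
  have huw : D.Reach u w := (ReflTransGen.single huv).tail hvw
  have hwu : D.Reach w u := (ReflTransGen.single hwz).tail hzu
  have from_u : ∀ t, D.Reach u t := by
    intro t
    rcases h.cover t with rfl | rfl | rfl | rfl | rfl | ht
    exacts [.refl, .single huv, huw, huw.tail hwz, huw.tail hwx,
      .single ((h.adj _ _).2 (by simp [ht]))]
  have to_u : ∀ t, D.Reach t u := by
    intro t
    rcases h.cover t with rfl | rfl | rfl | rfl | rfl | ht
    exacts [.refl, hwu.head hvw, hwu, .single hzu, .single hxu,
      hwu.head ((h.adj _ _).2 (by simp [ht]))]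
  exact fun s t => (to_u s).trans (from_u t)

theorem cycle4 (h : IsH5 D u v w z x A) : D.Cycle4 u v w z :=
  ⟨by simp, h.nodup.sublist (List.sublist_append_left [u, v, w, z] [x]),
    (by simp [List.isChain_cons_cons, h.adj] : [u, v, w, z].IsChain D.Adj), by simp [h.adj]⟩

theorem girth_eq_four (h : IsH5 D u v w z x A) : D.girth = 4 :=
  Digr.girth_eq_four h.cycle4 (h.isHom.oriented h5_oriented)
    (h.isHom.triangleFree h5_triangleFree)

theorem mReach_of_transGen (h : IsH5 D u v w z x A) {S : Set (V × V)} {a : V}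
    (ha : TransGen (D.delArcs S).Adj a a) :
    (D.delArcs S).MReach a u ∧ (D.delArcs S).MReach a w ∧
      ((D.delArcs S).MReach a z ∨ (D.delArcs S).MReach a x) := by
  have hφ := h.isHom.delArcs S
  -- the ranks witness that `h5` minus `{0}`, `{2}` or `{3, 4}` is acyclic
  obtain ⟨c₀, hc₀, hac₀⟩ := hφ.exists_mReach_of_rank (s := {0}) ![0, 0, 1, 3, 2] (by decide) ha
  obtain ⟨c₂, hc₂, hac₂⟩ := hφ.exists_mReach_of_rank (s := {2}) ![2, 3, 0, 1, 0] (by decide) ha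
  obtain ⟨c, hc, hac⟩ := hφ.exists_mReach_of_rank (s := {3, 4}) ![0, 1, 2, 0, 0] (by decide) ha
  rw [eq_of_h5Label_eq (v := v) hc₀ (by decide)] at hac₀
  rw [eq_of_h5Label_eq (v := v) hc₂ (by decide)] at hac₂
  refine ⟨hac₀, hac₂, ?_⟩
  rcases hc with hc | hc <;> rw [eq_of_h5Label_eq (v := v) hc (by decide)] at hac
  exacts [.inl hac, .inr hac]

theorem not_lambdaPrimeConnected (h : IsH5 D u v w z x A) : ¬ D.LambdaPrimeConnected := by
  refine not_lambdaPrimeConnected_of_forall_delArcs fun S a ha p q hpq => ?_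
  obtain ⟨hu, hw, hzx⟩ := h.mReach_of_transGen ha
  rcases (h.adj p q).1 hpq with ⟨rfl, -⟩ | ⟨-, rfl⟩ | ⟨rfl, -⟩ | ⟨-, rfl⟩ | ⟨rfl, -⟩ | ⟨-, rfl⟩ |
    ⟨rfl, rfl⟩ | ⟨rfl, -⟩ | ⟨-, rfl⟩
  exacts [.inl hu, .inr hw, .inl hw, .inr hu, .inl hw, .inr hu, hzx.symm, .inl hu, .inr hw]

end IsH5

end Digr

/-- A member of the family H₅ (two 4-cycles sharing the path
`u,v,w`, an arc between `x` and `z` in one fixed direction, and vertices `a`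
with `u→a→w`) is strongly connected of girth 4 but not λ'-connected. -/
theorem stmt15 {V : Type} (D : Digr V) (u v w z x : V) (A : Set V)
    (hnd : [u, v, w, z, x].Nodup)
    (hA : ∀ a ∈ A, a ∉ ({u, v, w, z, x} : Set V))
    (hcov : ∀ t : V, t ∈ ({u, v, w, z, x} : Set V) ∪ A)
    (hdir : Xor' (D.Adj x z) (D.Adj z x))
    (hAdj : ∀ p q : V, D.Adj p q ↔
      (p = u ∧ q = v) ∨ (p = v ∧ q = w) ∨ (p = w ∧ q = z) ∨ (p = z ∧ q = u) ∨
      (p = w ∧ q = x) ∨ (p = x ∧ q = u) ∨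
      (p = x ∧ q = z ∧ D.Adj x z) ∨ (p = z ∧ q = x ∧ D.Adj z x) ∨
      (p = u ∧ q ∈ A) ∨ (p ∈ A ∧ q = w)) :
    D.StronglyConnected ∧ D.girth = 4 ∧ ¬ D.LambdaPrimeConnected := by
  have cover : ∀ t, t = u ∨ t = v ∨ t = w ∨ t = z ∨ t = x ∨ t ∈ A := fun t => by
    simpa [or_assoc] using hcov t
  -- swapping `z` and `x` reverses the arc between them and preserves everything else
  have hD : D.IsH5 u v w z x A ∨ D.IsH5 u v w x z A := by
    rcases hdir with ⟨hxz, hzx⟩ | ⟨hzx, hxz⟩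
    · exact .inl ⟨hnd, hA, cover, fun p q => by
        rw [hAdj p q]; simp only [hxz, hzx, and_true, and_false, false_or]⟩
    · refine .inr ⟨hnd.perm (.cons _ (.cons _ (.cons _ (.swap _ _ _)))), ?_, fun t => ?_,
        fun p q => ?_⟩
      · simpa only [Set.pair_comm x z] using hA
      · simpa only [or_comm, or_left_comm] using cover t
      · rw [hAdj p q]
        simp only [hxz, hzx, and_true, and_false, false_or, or_comm, or_left_comm]
  rcases hD with h | h <;>
    exact ⟨h.stronglyConnected, h.girth_eq_four, h.not_lambdaPrimeConnected⟩
end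

section
/- Let D be a strongly connected oriented graph of girth 4 in which, for some 4-cycle (u,v,w,z,u), the digraph D − {u,v,w,z} consists only of isolated vertices (contains no arc), and suppose D contains no 4-cycle sharing exactly two arcs with (u,v,w,z,u). Then D is isomorphic to a member of family H₁: its vertex set is {u,v,w,z} ∪ A ∪ B ∪ C ∪ E where u→a→v (a∈A), v→b→w (b∈B), w→c→z (c∈C), z→e→u (e∈E), and these together with the cycle arcs are all the arcs of D. -/
/-!
Girth 4 rules out loops, digons and triangles. Since `D - {u, v, w, z}` has no arc, every arc
touching an outside vertex `t` has its other end on the cycle, and strong connectivity gives `t`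
an in- and an out-neighbour. If `a → x` with `a` on the cycle, then `x` is the successor `b` of
`a`, or `x` lies outside and every out-neighbour `y` of `x` is `b`: `y = a` is a digon, `y` the
predecessor of `a` a triangle, and `y` opposite to `a` gives the 4-cycle `(a, x, y, ·)`, which
shares exactly two arcs with the original one. By cyclic symmetry this describes all four sides,
so each outside vertex subdivides exactly one side.
-/

namespace Digr

variable {V : Type} {D : Digr V}

theorem isCycleList_cons {a : V} {l : List V} : D.IsCycleList (a :: l) ↔
    (a :: l).Nodup ∧ (a :: l).IsChain D.Adj ∧ D.Adj ((a :: l).getLast (List.cons_ne_nil a l)) a :=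
  ⟨fun ⟨_, h⟩ => h, fun h => ⟨List.cons_ne_nil a l, h⟩⟩

section Girth

variable {a b c : V}

theorem four_le_length_of_isCycleList_s18 (hg : 4 ≤ D.girth) {l : List V} (hl : D.IsCycleList l) :
    4 ≤ l.length :=
  hg.trans (Nat.sInf_le ⟨l, hl, rfl⟩)

theorem not_adj_self (hg : 4 ≤ D.girth) (a : V) : ¬ D.Adj a a := fun h =>
  absurd (four_le_length_of_isCycleList_s18 hg (l := [a]) (isCycleList_cons.2 ⟨by simp, by simp, h⟩))
    (by simp)

theorem not_adj_of_adj (hg : 4 ≤ D.girth) (hab : D.Adj a b) : ¬ D.Adj b a := fun hba => by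
  have ne : a ≠ b := by rintro rfl; exact not_adj_self hg a hab
  exact absurd (four_le_length_of_isCycleList_s18 hg (l := [a, b])
    (isCycleList_cons.2 ⟨by simp [ne], by simp [hab], hba⟩)) (by simp)

theorem not_adj_of_adj_of_adj (hg : 4 ≤ D.girth) (hab : D.Adj a b) (hbc : D.Adj b c) :
    ¬ D.Adj c a := fun hca => by
  have ne_ab : a ≠ b := by rintro rfl; exact not_adj_self hg a hab
  have ne_bc : b ≠ c := by rintro rfl; exact not_adj_self hg b hbc
  have ne_ac : a ≠ c := by rintro rfl; exact not_adj_of_adj hg hab hbc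
  exact absurd (four_le_length_of_isCycleList_s18 hg (l := [a, b, c])
    (isCycleList_cons.2 ⟨by simp [ne_ab, ne_bc, ne_ac], by simp [hab, hbc], hca⟩)) (by simp)

end Girth

theorem StronglyConnected.exists_adj_of_ne (hS : D.StronglyConnected) {s t : V} (h : s ≠ t) :
    ∃ y, D.Adj s y := by
  rcases (hS s t).cases_head with rfl | ⟨y, hy, -⟩
  exacts [absurd rfl h, ⟨y, hy⟩]

theorem StronglyConnected.exists_adj_to_of_ne (hS : D.StronglyConnected) {s t : V} (h : s ≠ t) :
    ∃ x, D.Adj x t := by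
  rcases (hS s t).cases_tail with rfl | ⟨x, -, hx⟩
  exacts [absurd rfl h, ⟨x, hx⟩]

theorem mem_or_mem_of_not_hasArc_delVerts {Q : Set V} (h : ¬ (D.delVerts Q).HasArc) {x y : V}
    (hxy : D.Adj x y) : x ∈ Q ∨ y ∈ Q := by
  by_contra hc
  push Not at hc
  exact h ⟨x, y, hxy, hc⟩

theorem cycle4_iff_s18 {a b c d : V} :
    D.Cycle4 a b c d ↔ [a, b, c, d].Nodup ∧ D.Adj a b ∧ D.Adj b c ∧ D.Adj c d ∧ D.Adj d a := by
  simp [Cycle4, isCycleList_cons, and_assoc]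

theorem Cycle4.rotate {a b c d : V} (h : D.Cycle4 a b c d) : D.Cycle4 b c d a := by
  obtain ⟨hnd, hab, hbc, hcd, hda⟩ := cycle4_iff_s18.1 h
  exact cycle4_iff_s18.2 ⟨List.nodup_rotate (n := 1) |>.2 hnd, hbc, hcd, hda, hab⟩

theorem cycleArcs_four (a b c d : V) :
    cycleArcs [a, b, c, d] = [(a, b), (b, c), (c, d), (d, a)] := rfl

section SharedArcs

variable [DecidableEq V]

def HasFourCycleSharingTwoArcs (D : Digr V) (l : List V) : Prop :=
  ∃ m : List V, D.IsCycleList m ∧ m.length = 4 ∧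
    ((cycleArcs m).toFinset ∩ (cycleArcs l).toFinset).card = 2

theorem hasFourCycleSharingTwoArcs_rotate {a b c d : V} :
    D.HasFourCycleSharingTwoArcs [b, c, d, a] ↔ D.HasFourCycleSharingTwoArcs [a, b, c, d] := by
  have h : (cycleArcs [b, c, d, a]).toFinset = (cycleArcs [a, b, c, d]).toFinset := by
    ext; simp only [cycleArcs_four, List.mem_toFinset, List.mem_cons, List.not_mem_nil]; tauto
  simp only [HasFourCycleSharingTwoArcs, h]

theorem card_cycleArcs_inter_eq_two {a b c d t : V} (hnd : [a, b, c, d].Nodup)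
    (ht : t ∉ [a, b, c, d]) :
    ((cycleArcs [a, t, c, d]).toFinset ∩ (cycleArcs [a, b, c, d]).toFinset).card = 2 := by
  simp only [List.nodup_cons, List.mem_cons, List.not_mem_nil, not_or] at hnd ht
  have h : (cycleArcs [a, t, c, d]).toFinset ∩ (cycleArcs [a, b, c, d]).toFinset =
      {(c, d), (d, a)} := by
    ext ⟨x, y⟩
    simp only [cycleArcs_four, Finset.mem_inter, List.mem_toFinset, List.mem_cons,
      List.not_mem_nil, Finset.mem_insert, Finset.mem_singleton, Prod.mk.injEq]
    constructor
    · rintro ⟨h1 | h1 | h1 | h1, h2 | h2 | h2 | h2⟩ <;> simp_all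
    · rintro (⟨rfl, rfl⟩ | ⟨rfl, rfl⟩) <;> simp
  rw [h, Finset.card_pair (by simp [Prod.ext_iff]; tauto)]

theorem Cycle4.hasFourCycleSharingTwoArcs {a b c d t : V} (hC : D.Cycle4 a b c d)
    (ht : t ∉ [a, b, c, d]) (hat : D.Adj a t) (htc : D.Adj t c) :
    D.HasFourCycleSharingTwoArcs [a, b, c, d] := by
  obtain ⟨hnd, -, -, hcd, hda⟩ := cycle4_iff_s18.1 hC
  refine ⟨[a, t, c, d], cycle4_iff_s18.2 ⟨?_, hat, htc, hcd, hda⟩, rfl,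
    card_cycleArcs_inter_eq_two hnd ht⟩
  simp only [List.nodup_cons, List.mem_cons, List.not_mem_nil, not_or] at hnd ht ⊢
  tauto

end SharedArcs

def ExitsAlongSide (D : Digr V) (Q : Set V) (a b : V) : Prop :=
  ∀ x, D.Adj a x → x = b ∨ x ∉ Q ∧ ∀ y, D.Adj x y → y = b

theorem Cycle4.exitsAlongSide [DecidableEq V] {a b c d : V} {Q : Set V} (hg : 4 ≤ D.girth)
    (hC : D.Cycle4 a b c d) (hQ : Q = {a, b, c, d}) (hiso : ¬ (D.delVerts Q).HasArc)
    (hno : ¬ D.HasFourCycleSharingTwoArcs [a, b, c, d]) : D.ExitsAlongSide Q a b := by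
  obtain ⟨-, -, -, hcd, hda⟩ := cycle4_iff_s18.1 hC
  intro x hax
  by_cases hx : x ∈ Q
  · left
    simp only [hQ, Set.mem_insert_iff, Set.mem_singleton_iff] at hx
    rcases hx with rfl | rfl | rfl | rfl
    · exact absurd hax (not_adj_self hg x)
    · rfl
    · exact absurd hda (not_adj_of_adj_of_adj hg hax hcd)
    · exact absurd hax (not_adj_of_adj hg hda)
  · refine .inr ⟨hx, fun y hxy => ?_⟩
    have hy := (mem_or_mem_of_not_hasArc_delVerts hiso hxy).resolve_left hx
    have hx' : x ∉ [a, b, c, d] := by simpa [hQ] using hx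
    simp only [hQ, Set.mem_insert_iff, Set.mem_singleton_iff] at hy
    rcases hy with rfl | rfl | rfl | rfl
    · exact absurd hxy (not_adj_of_adj hg hax)
    · rfl
    · exact absurd (hC.hasFourCycleSharingTwoArcs hx' hax hxy) hno
    · exact absurd hda (not_adj_of_adj_of_adj hg hax hxy)

theorem Cycle4.exitsAlongSide_all [DecidableEq V] {a b c d : V} (hg : 4 ≤ D.girth)
    (hC : D.Cycle4 a b c d) (hiso : ¬ (D.delVerts {a, b, c, d}).HasArc)
    (hno : ¬ D.HasFourCycleSharingTwoArcs [a, b, c, d]) :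
    D.ExitsAlongSide {a, b, c, d} a b ∧ D.ExitsAlongSide {a, b, c, d} b c ∧
      D.ExitsAlongSide {a, b, c, d} c d ∧ D.ExitsAlongSide {a, b, c, d} d a := by
  have rot : ∀ {a b c d : V}, ({a, b, c, d} : Set V) = {b, c, d, a} := by
    intros; ext; simp only [Set.mem_insert_iff, Set.mem_singleton_iff]; tauto
  have hno₁ := mt hasFourCycleSharingTwoArcs_rotate.1 hno
  have hno₂ := mt hasFourCycleSharingTwoArcs_rotate.1 hno₁
  have hno₃ := mt hasFourCycleSharingTwoArcs_rotate.1 hno₂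
  exact ⟨hC.exitsAlongSide hg rfl hiso hno, hC.rotate.exitsAlongSide hg rot hiso hno₁,
    hC.rotate.rotate.exitsAlongSide hg (rot.trans rot) hiso hno₂,
    hC.rotate.rotate.rotate.exitsAlongSide hg (rot.trans (rot.trans rot)) hiso hno₃⟩

def outNeighborsOutside (D : Digr V) (Q : Set V) (a : V) : Set V :=
  {t | t ∉ Q ∧ D.Adj a t}

namespace ExitsAlongSide

variable {Q : Set V} {a b a' b' t y : V}

theorem eq_or_mem (h : D.ExitsAlongSide Q a b) (hat : D.Adj a t) :
    t = b ∨ t ∈ D.outNeighborsOutside Q a :=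
  (h t hat).imp_right fun h => ⟨h.1, hat⟩

theorem eq_of_adj_of_adj (h : D.ExitsAlongSide Q a b) (hb : b ∈ Q) (ht : t ∉ Q)
    (hat : D.Adj a t) (hty : D.Adj t y) : y = b :=
  ((h t hat).resolve_left (by rintro rfl; exact ht hb)).2 y hty

theorem adj_of_mem (h : D.ExitsAlongSide Q a b) (hb : b ∈ Q) (hout : ∃ y, D.Adj t y)
    (ht : t ∈ D.outNeighborsOutside Q a) : D.Adj t b := by
  obtain ⟨y, hy⟩ := hout
  exact h.eq_of_adj_of_adj hb ht.1 ht.2 hy ▸ hy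

theorem disjoint (h : D.ExitsAlongSide Q a b) (h' : D.ExitsAlongSide Q a' b') (hb : b ∈ Q)
    (hb' : b' ∈ Q) (hne : b ≠ b') (hout : ∀ t ∉ Q, ∃ y, D.Adj t y) :
    Disjoint (D.outNeighborsOutside Q a) (D.outNeighborsOutside Q a') := by
  refine Set.disjoint_left.2 fun t ⟨ht, hat⟩ ⟨_, hat'⟩ => hne ?_
  obtain ⟨y, hy⟩ := hout t ht
  rw [← h.eq_of_adj_of_adj hb ht hat hy, h'.eq_of_adj_of_adj hb' ht hat' hy]

end ExitsAlongSide

def InFamilyH1 (D : Digr V) (u v w z : V) : Prop :=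
  ∃ A B C E : Set V,
    (∀ t ∈ A ∪ B ∪ C ∪ E, t ∉ ({u, v, w, z} : Set V)) ∧
    List.Pairwise Disjoint [A, B, C, E] ∧
    (∀ t : V, t ∈ ({u, v, w, z} : Set V) ∪ A ∪ B ∪ C ∪ E) ∧
    (∀ p q : V, D.Adj p q ↔
      (p = u ∧ q = v) ∨ (p = v ∧ q = w) ∨ (p = w ∧ q = z) ∨ (p = z ∧ q = u) ∨
      (p = u ∧ q ∈ A) ∨ (p ∈ A ∧ q = v) ∨
      (p = v ∧ q ∈ B) ∨ (p ∈ B ∧ q = w) ∨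
      (p = w ∧ q ∈ C) ∨ (p ∈ C ∧ q = z) ∨
      (p = z ∧ q ∈ E) ∨ (p ∈ E ∧ q = u))

theorem pairwise_disjoint_outNeighborsOutside {u v w z : V} (hC : D.Cycle4 u v w z)
    (hout : ∀ t ∉ ({u, v, w, z} : Set V), ∃ y, D.Adj t y)
    (hu : D.ExitsAlongSide {u, v, w, z} u v) (hv : D.ExitsAlongSide {u, v, w, z} v w)
    (hw : D.ExitsAlongSide {u, v, w, z} w z) (hz : D.ExitsAlongSide {u, v, w, z} z u) :
    List.Pairwise Disjoint
      [D.outNeighborsOutside {u, v, w, z} u, D.outNeighborsOutside {u, v, w, z} v,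
        D.outNeighborsOutside {u, v, w, z} w, D.outNeighborsOutside {u, v, w, z} z] := by
  set Q : Set V := {u, v, w, z}
  have hnd := (cycle4_iff_s18.1 hC).1
  simp only [List.nodup_cons, List.mem_cons, List.not_mem_nil, or_false, not_or] at hnd
  obtain ⟨⟨nuv, nuw, nuz⟩, ⟨nvw, nvz⟩, nwz, -⟩ := hnd
  obtain ⟨huQ, hvQ, hwQ, hzQ⟩ : u ∈ Q ∧ v ∈ Q ∧ w ∈ Q ∧ z ∈ Q := by simp [Q]
  simp only [List.pairwise_cons, List.mem_cons, List.not_mem_nil, or_false, forall_eq_or_imp,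
    forall_eq, List.Pairwise.nil, and_true, IsEmpty.forall_iff, implies_true]
  exact ⟨⟨hu.disjoint hv hvQ hwQ nvw hout, hu.disjoint hw hvQ hzQ nvz hout,
    hu.disjoint hz hvQ huQ (Ne.symm nuv) hout⟩, ⟨hv.disjoint hw hwQ hzQ nwz hout,
    hv.disjoint hz hwQ huQ (Ne.symm nuw) hout⟩, hw.disjoint hz hzQ huQ (Ne.symm nuz) hout⟩

theorem inFamilyH1_of_exitsAlongSide {u v w z : V} (hC : D.Cycle4 u v w z)
    (hin : ∀ t ∉ ({u, v, w, z} : Set V), ∃ x ∈ ({u, v, w, z} : Set V), D.Adj x t)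
    (hout : ∀ t ∉ ({u, v, w, z} : Set V), ∃ y, D.Adj t y)
    (hu : D.ExitsAlongSide {u, v, w, z} u v) (hv : D.ExitsAlongSide {u, v, w, z} v w)
    (hw : D.ExitsAlongSide {u, v, w, z} w z) (hz : D.ExitsAlongSide {u, v, w, z} z u) :
    D.InFamilyH1 u v w z := by
  set Q : Set V := {u, v, w, z}
  obtain ⟨-, huv, hvw, hwz, hzu⟩ := cycle4_iff_s18.1 hC
  obtain ⟨huQ, hvQ, hwQ, hzQ⟩ : u ∈ Q ∧ v ∈ Q ∧ w ∈ Q ∧ z ∈ Q := by simp [Q]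
  refine ⟨D.outNeighborsOutside Q u, D.outNeighborsOutside Q v, D.outNeighborsOutside Q w,
    D.outNeighborsOutside Q z, ?_, ?_, ?_, fun p q => ⟨fun hpq => ?_, ?_⟩⟩
  · rintro t (((⟨ht, -⟩ | ⟨ht, -⟩) | ⟨ht, -⟩) | ⟨ht, -⟩) <;> exact ht
  · exact pairwise_disjoint_outNeighborsOutside hC hout hu hv hw hz
  · intro t
    by_cases ht : t ∈ Q
    · exact .inl (.inl (.inl (.inl ht)))
    obtain ⟨x, hx, hxt⟩ := hin t ht
    simp only [Q, Set.mem_insert_iff, Set.mem_singleton_iff] at hx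
    simp only [Set.mem_union, outNeighborsOutside, Set.mem_ofPred_eq]
    rcases hx with rfl | rfl | rfl | rfl <;> tauto
  · by_cases hp : p ∈ Q
    · simp only [Q, Set.mem_insert_iff, Set.mem_singleton_iff] at hp
      rcases hp with rfl | rfl | rfl | rfl
      · rcases hu.eq_or_mem hpq with hq | hq <;> simp [hq]
      · rcases hv.eq_or_mem hpq with hq | hq <;> simp [hq]
      · rcases hw.eq_or_mem hpq with hq | hq <;> simp [hq]
      · rcases hz.eq_or_mem hpq with hq | hq <;> simp [hq]
    · obtain ⟨x, hx, hxp⟩ := hin p hp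
      have hpS : p ∈ D.outNeighborsOutside Q x := ⟨hp, hxp⟩
      simp only [Q, Set.mem_insert_iff, Set.mem_singleton_iff] at hx
      rcases hx with rfl | rfl | rfl | rfl
      · simp [hpS, hu.eq_of_adj_of_adj hvQ hp hxp hpq]
      · simp [hpS, hv.eq_of_adj_of_adj hwQ hp hxp hpq]
      · simp [hpS, hw.eq_of_adj_of_adj hzQ hp hxp hpq]
      · simp [hpS, hz.eq_of_adj_of_adj huQ hp hxp hpq]
  · rintro (⟨rfl, rfl⟩ | ⟨rfl, rfl⟩ | ⟨rfl, rfl⟩ | ⟨rfl, rfl⟩ | ⟨rfl, hq⟩ | ⟨hp, rfl⟩ |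
      ⟨rfl, hq⟩ | ⟨hp, rfl⟩ | ⟨rfl, hq⟩ | ⟨hp, rfl⟩ | ⟨rfl, hq⟩ | ⟨hp, rfl⟩)
    exacts [huv, hvw, hwz, hzu, hq.2, hu.adj_of_mem hvQ (hout p hp.1) hp, hq.2,
      hv.adj_of_mem hwQ (hout p hp.1) hp, hq.2, hw.adj_of_mem hzQ (hout p hp.1) hp, hq.2,
      hz.adj_of_mem huQ (hout p hp.1) hp]

end Digr

theorem stmt18_general {V : Type} [DecidableEq V] (D : Digr V)
    (hS : D.StronglyConnected) (hg : D.girth = 4)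
    (u v w z : V) (hC : D.Cycle4 u v w z)
    (hiso : ¬ (D.delVerts {u, v, w, z}).HasArc)
    (hno : ¬ ∃ l : List V, D.IsCycleList l ∧ l.length = 4 ∧
      ((Digr.cycleArcs l).toFinset ∩ (Digr.cycleArcs [u, v, w, z]).toFinset).card = 2) :
    ∃ A B C E : Set V,
      (∀ t ∈ A ∪ B ∪ C ∪ E, t ∉ ({u, v, w, z} : Set V)) ∧
      List.Pairwise Disjoint [A, B, C, E] ∧
      (∀ t : V, t ∈ ({u, v, w, z} : Set V) ∪ A ∪ B ∪ C ∪ E) ∧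
      (∀ p q : V, D.Adj p q ↔
        (p = u ∧ q = v) ∨ (p = v ∧ q = w) ∨ (p = w ∧ q = z) ∨ (p = z ∧ q = u) ∨
        (p = u ∧ q ∈ A) ∨ (p ∈ A ∧ q = v) ∨
        (p = v ∧ q ∈ B) ∨ (p ∈ B ∧ q = w) ∨
        (p = w ∧ q ∈ C) ∨ (p ∈ C ∧ q = z) ∨
        (p = z ∧ q ∈ E) ∨ (p ∈ E ∧ q = u)) := by
  have hne : ∀ {t}, t ∉ ({u, v, w, z} : Set V) → t ≠ u := by rintro t ht rfl; simp at ht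
  have hin : ∀ t ∉ ({u, v, w, z} : Set V), ∃ x ∈ ({u, v, w, z} : Set V), D.Adj x t := by
    intro t ht
    obtain ⟨x, hx⟩ := hS.exists_adj_to_of_ne (hne ht).symm
    exact ⟨x, (Digr.mem_or_mem_of_not_hasArc_delVerts hiso hx).resolve_right ht, hx⟩
  have hout : ∀ t ∉ ({u, v, w, z} : Set V), ∃ y, D.Adj t y :=
    fun t ht => hS.exists_adj_of_ne (hne ht)
  obtain ⟨hu, hv, hw, hz⟩ := hC.exitsAlongSide_all hg.ge hiso hno
  exact Digr.inFamilyH1_of_exitsAlongSide hC hin hout hu hv hw hz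

/-- If `D − {u,v,w,z}` has no arc and no 4-cycle of `D` shares
exactly two arcs with `(u,v,w,z,u)`, then `D` is a member of family H₁. -/
theorem stmt18 {V : Type} [Fintype V] [DecidableEq V] (D : Digr V)
    (hO : D.Oriented) (hS : D.StronglyConnected) (hg : D.girth = 4)
    (u v w z : V) (hC : D.Cycle4 u v w z)
    (hiso : ¬ (D.delVerts {u, v, w, z}).HasArc)
    (hno : ¬ ∃ l : List V, D.IsCycleList l ∧ l.length = 4 ∧
      ((Digr.cycleArcs l).toFinset ∩ (Digr.cycleArcs [u, v, w, z]).toFinset).card = 2) :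
    ∃ A B C E : Set V,
      (∀ t ∈ A ∪ B ∪ C ∪ E, t ∉ ({u, v, w, z} : Set V)) ∧
      List.Pairwise Disjoint [A, B, C, E] ∧
      (∀ t : V, t ∈ ({u, v, w, z} : Set V) ∪ A ∪ B ∪ C ∪ E) ∧
      (∀ p q : V, D.Adj p q ↔
        (p = u ∧ q = v) ∨ (p = v ∧ q = w) ∨ (p = w ∧ q = z) ∨ (p = z ∧ q = u) ∨
        (p = u ∧ q ∈ A) ∨ (p ∈ A ∧ q = v) ∨
        (p = v ∧ q ∈ B) ∨ (p ∈ B ∧ q = w) ∨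
        (p = w ∧ q ∈ C) ∨ (p ∈ C ∧ q = z) ∨
        (p = z ∧ q ∈ E) ∨ (p ∈ E ∧ q = u)) :=
  stmt18_general D hS hg u v w z hC hiso hno
end
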